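/- arXiv:1111.7154 — 12 statements merged into one kernel-verified Lean document; each statement's English description precedes it below -/
import Mathlib

section
/- The partial involutions on T are closed under linear application: if f and g are partial involutions on T, then f • g is a partial involution on T; in particular, if (u,v) ∈ f • g then (v,u) ∈ f • g. -/
/-- Ground terms over the signature Σ = {ε, l, r, p}. -/
inductive T : Type
  | eps : T
  | l : T → T
  | r : T → T
  | p : T → T → T
  deriving DecidableEq

/-- A relation is functional. -/
def Fnal {α : Type*} (f : α → α → Prop) : Prop :=
  ∀ x y z, f x y → f x z → y = z

/-- A relation is injective. -/
def Inj {α : Type*} (f : α → α → Prop) : Prop :=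
  ∀ x y z, f x z → f y z → x = y

/-- A partial injective function on `T`, viewed as a relation. -/
def PartialInjection (f : T → T → Prop) : Prop := Fnal f ∧ Inj f

/-- A partial involution on `T`: a partial injective function that is symmetric. -/
def PartialInvolution (f : T → T → Prop) : Prop :=
  PartialInjection f ∧ ∀ x y, f x y → f y x

/-- Replication: `!f = {(p(t,u), p(t,v)) | t ∈ T, (u,v) ∈ f}`. -/
def Repl (f : T → T → Prop) : T → T → Prop :=
  fun a b => ∃ t u v, f u v ∧ a = T.p t u ∧ b = T.p t v

/-- Relational composition: `(u,w) ∈ f ; g` iff `∃ v, (u,v) ∈ f ∧ (v,w) ∈ g`. -/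
def RComp (f g : T → T → Prop) : T → T → Prop :=
  fun u w => ∃ v, f u v ∧ g v w

/-- Linear application:
`f • g = f_rr ∪ (f_rl ; g ; (f_ll ; g)* ; f_lr)` where
`f_ij = {(u,v) | (i(u), j(v)) ∈ f}` for `i, j ∈ {l, r}`. -/
def LApp (f g : T → T → Prop) : T → T → Prop :=
  fun u v =>
    f (T.r u) (T.r v) ∨
    RComp (fun a b => f (T.r a) (T.l b))
      (RComp g
        (RComp (Relation.ReflTransGen (RComp (fun a b => f (T.l a) (T.l b)) g))
          (fun a b => f (T.l a) (T.r b)))) u v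

/-! Functionality: the two branches of `f • g` have disjoint domains, since `f` cannot send
`r u` both to an `r`-term and to an `l`-term; inside the second branch the `(f_ll ; g)*`-chain
is deterministic and can only be left through `f_lr`, whose domain is disjoint from that of
`f_ll`. Symmetry: a path of the second branch read backwards, with `f` and `g` symmetric, is
again such a path. Injectivity follows from functionality and symmetry. -/

section Relations

variable {α : Type*}

theorem Fnal.comp {R S : α → α → Prop} (hR : Fnal R) (hS : Fnal S) :
    Fnal (Relation.Comp R S) := by
  rintro _ _ _ ⟨m, hxm, hmy⟩ ⟨m', hxm', hm'z⟩
  cases hR _ _ _ hxm hxm'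
  exact hS _ _ _ hmy hm'z

theorem Fnal.comp_reflTransGen {R E : α → α → Prop} (hR : Fnal R) (hE : Fnal E)
    (hdisj : ∀ x y w, R x y → E x w → False) :
    Fnal (Relation.Comp (Relation.ReflTransGen R) E) := by
  rintro b v v' ⟨c, hbc, hcv⟩ ⟨c', hbc', hc'v'⟩
  induction hbc using Relation.ReflTransGen.head_induction_on with
  | refl =>
    rcases hbc'.cases_head with rfl | ⟨y, hby, -⟩
    · exact hE _ _ _ hcv hc'v'
    · exact (hdisj _ _ _ hby hcv).elim
  | head hby _ ih =>
    rcases hbc'.cases_head with rfl | ⟨y', hby', hy'c'⟩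
    · exact (hdisj _ _ _ hby hc'v').elim
    · cases hR _ _ _ hby hby'
      exact ih hy'c'

theorem inj_of_fnal_of_symm {R : α → α → Prop} (hR : Fnal R) (hsymm : ∀ x y, R x y → R y x) :
    Inj R :=
  fun _ _ _ hxz hyz => hR _ _ _ (hsymm _ _ hxz) (hsymm _ _ hyz)

theorem exists_reverse_of_reflTransGen_comp {s g : α → α → Prop}
    (hs : ∀ x y, s x y → s y x) (hg : ∀ x y, g x y → g y x) {a b c : α} (hab : g a b)
    (hbc : Relation.ReflTransGen (Relation.Comp s g) b c) :
    ∃ a', g c a' ∧ Relation.ReflTransGen (Relation.Comp s g) a' a := by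
  induction hbc with
  | refl => exact ⟨a, hg _ _ hab, .refl⟩
  | tail _ hcd ih =>
    obtain ⟨a', hca', ha'a⟩ := ih
    obtain ⟨m, hcm, hmd⟩ := hcd
    exact ⟨m, hg _ _ hmd, .head ⟨_, hs _ _ hcm, hca'⟩ ha'a⟩

end Relations

theorem lapp_symm {f g : T → T → Prop} (hf : ∀ x y, f x y → f y x)
    (hg : ∀ x y, g x y → g y x) {u v : T} (huv : LApp f g u v) : LApp f g v u := by
  rcases huv with hrr | ⟨a, hua, b, hab, c, hbc, hcv⟩
  · exact .inl (hf _ _ hrr)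
  · obtain ⟨a', hca', ha'a⟩ :=
      exists_reverse_of_reflTransGen_comp (fun _ _ => hf _ _) hg hab hbc
    exact .inr ⟨c, hf _ _ hcv, a', hca', a, ha'a, hf _ _ hua⟩

theorem fnal_lapp {f g : T → T → Prop} (hf : Fnal f) (hg : Fnal g) : Fnal (LApp f g) := by
  have hll : Fnal fun a b => f (T.l a) (T.l b) := fun _ _ _ hy hz => T.l.inj (hf _ _ _ hy hz)
  have hlr : Fnal fun a b => f (T.l a) (T.r b) := fun _ _ _ hy hz => T.r.inj (hf _ _ _ hy hz)
  have hchain := (hll.comp hg).comp_reflTransGen hlr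
    fun _ _ _ ⟨_, hxm, _⟩ hxw => T.noConfusion (hf _ _ _ hxm hxw)
  rintro u v v' (hrr | ⟨a, hua, b, hab, hbv⟩) (hrr' | ⟨a', hua', b', hab', hb'v'⟩)
  · exact T.r.inj (hf _ _ _ hrr hrr')
  · exact T.noConfusion (hf _ _ _ hrr hua')
  · exact T.noConfusion (hf _ _ _ hua hrr')
  · cases T.l.inj (hf _ _ _ hua hua')
    cases hg _ _ _ hab hab'
    exact hchain _ _ _ hbv hb'v'

/-- Partial involutions are closed under linear application; in particular
`(u,v) ∈ f • g` implies `(v,u) ∈ f • g`. -/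
theorem lapp_involution_closure (f g : T → T → Prop)
    (hf : PartialInvolution f) (hg : PartialInvolution g) :
    PartialInvolution (LApp f g) ∧ ∀ u v, LApp f g u v → LApp f g v u := by
  obtain ⟨⟨hf_fnal, -⟩, hf_symm⟩ := hf
  obtain ⟨⟨hg_fnal, -⟩, hg_symm⟩ := hg
  have hsymm : ∀ u v, LApp f g u v → LApp f g v u := fun _ _ => lapp_symm hf_symm hg_symm
  have hfnal := fnal_lapp hf_fnal hg_fnal
  exact ⟨⟨⟨hfnal, inj_of_fnal_of_symm hfnal hsymm⟩, hsymm⟩, hsymm⟩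
end

section
/- The partial injective functions on T are closed under linear application: if f and g are partial injective functions on T, then f • g is a partial injective function on T (i.e., f • g is both functional and injective). -/
open Function Relation

section General

variable {α : Type*}

theorem inj_iff_fnal_flip {f : α → α → Prop} : Inj f ↔ Fnal (flip f) :=
  ⟨fun h _ _ _ hy hz => h _ _ _ hy hz, fun h _ _ _ hx hy => h _ _ _ hx hy⟩

theorem Fnal.comp_injective {f : α → α → Prop} (hf : Fnal f) (i : α → α) {j : α → α}
    (hj : Injective j) : Fnal (fun a b => f (i a) (j b)) :=
  fun _ _ _ hy hz => hj (hf _ _ _ hy hz)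

theorem Relation.ReflTransGen.eq_of_fnal_of_stuck {R : α → α → Prop} (hR : Fnal R) {E : α → Prop}
    (hE : ∀ a b, E a → ¬ R a b) {b c c' : α} (hc : ReflTransGen R b c) (hEc : E c)
    (hc' : ReflTransGen R b c') (hEc' : E c') : c = c' := by
  induction hc using ReflTransGen.head_induction_on generalizing c' with
  | refl =>
    rcases hc'.cases_head with rfl | ⟨_, hstep, -⟩
    · rfl
    · exact absurd hstep (hE _ _ hEc)
  | head hstep _ ih =>
    rcases hc'.cases_head with rfl | ⟨_, hstep', htail'⟩
    · exact absurd hstep (hE _ _ hEc')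
    · obtain rfl := hR _ _ _ hstep hstep'
      exact ih htail' hEc'

end General

section Composition

variable {R S : T → T → Prop}

theorem swap_rcomp : swap (RComp R S) = RComp (swap S) (swap R) := by
  ext u w
  exact exists_congr fun _ => and_comm

theorem Fnal.rcomp (hR : Fnal R) (hS : Fnal S) : Fnal (RComp R S) := by
  rintro x y z ⟨v, hxv, hvy⟩ ⟨v', hxv', hv'z⟩
  obtain rfl := hR _ _ _ hxv hxv'
  exact hS _ _ _ hvy hv'z

theorem rcomp_reflTransGen_slide {a b c : T} (hab : R a b) (hbc : ReflTransGen (RComp S R) b c) :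
    ∃ m, ReflTransGen (RComp R S) a m ∧ R m c := by
  induction hbc using ReflTransGen.head_induction_on generalizing a with
  | refl => exact ⟨a, .refl, hab⟩
  | head hstep _ ih =>
    obtain ⟨w, hbw, hw⟩ := hstep
    obtain ⟨m, ham, hmc⟩ := ih hw
    exact ⟨m, .head ⟨_, hab, hbw⟩ ham, hmc⟩

end Composition

section LinearApplication

variable {f g : T → T → Prop}

theorem LApp.flip {u v : T} (h : LApp f g u v) : LApp (flip f) (flip g) v u := by
  rcases h with h | ⟨a, ha, b, hab, c, hchain, hexit⟩
  · exact Or.inl h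
  · obtain ⟨m, hbm, hmc⟩ := rcomp_reflTransGen_slide hab hchain
    have hmb := hbm.swap
    rw [swap_rcomp] at hmb
    exact Or.inr ⟨c, hexit, m, hmc, a, hmb, ha⟩

theorem Fnal.lapp (hf : Fnal f) (hg : Fnal g) : Fnal (LApp f g) := by
  have hexit_ne_step : ∀ {c y m}, f (T.l c) (T.r y) → ¬ f (T.l c) (T.l m) :=
    fun hy hm => T.noConfusion (hf _ _ _ hy hm)
  rintro u y z (hy | ⟨a, ha, b, hab, c, hchain, hexit⟩) hz
  · rcases hz with hz | ⟨a', ha', -⟩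
    · exact T.r.inj (hf _ _ _ hy hz)
    · exact T.noConfusion (hf _ _ _ hy ha')
  · rcases hz with hz | ⟨a', ha', b', hab', c', hchain', hexit'⟩
    · exact T.noConfusion (hf _ _ _ ha hz)
    obtain rfl : a = a' := T.l.inj (hf _ _ _ ha ha')
    obtain rfl : b = b' := hg _ _ _ hab hab'
    have hstep : Fnal (RComp (fun a b => f (T.l a) (T.l b)) g) :=
      (hf.comp_injective T.l fun _ _ => T.l.inj).rcomp hg
    obtain rfl : c = c' :=
      hchain.eq_of_fnal_of_stuck hstep (E := fun c => ∃ y, f (T.l c) (T.r y))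
        (fun _ _ ⟨_, hy⟩ ⟨_, hm, _⟩ => hexit_ne_step hy hm) ⟨y, hexit⟩ hchain' ⟨z, hexit'⟩
    exact T.r.inj (hf _ _ _ hexit hexit')

end LinearApplication

/-- Partial injective functions are closed under linear application. -/
theorem lapp_partial_injection_closure (f g : T → T → Prop)
    (hf : PartialInjection f) (hg : PartialInjection g) :
    PartialInjection (LApp f g) := by
  obtain ⟨hf_fnal, hf_inj⟩ := hf
  obtain ⟨hg_fnal, hg_inj⟩ := hg
  have hflip : Fnal (LApp (flip f) (flip g)) :=
    (inj_iff_fnal_flip.mp hf_inj).lapp (inj_iff_fnal_flip.mp hg_inj)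
  exact ⟨hf_fnal.lapp hg_fnal, fun x y z hx hy => hflip z x y hx.flip hy.flip⟩
end

section
/- The partial involution f_I realizes the identity combinator: for every partial injective function a on T, f_I • a = a. -/
/-- The partial involution realizing the identity combinator: the symmetric closure of
`{(l(t), r(t)) | t ∈ T}`. -/
def fI : T → T → Prop := fun a b =>
  (∃ t, a = T.l t ∧ b = T.r t) ∨ (∃ t, a = T.r t ∧ b = T.l t)

-- The loop `(f_ll ; g)*` collapses to the diagonal, so only `f_rl ; g ; f_lr = g` survives.
theorem lApp_eq_self_of_components {f : T → T → Prop} (g : T → T → Prop)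
    (hrr : ∀ u v, ¬ f (T.r u) (T.r v)) (hll : ∀ u v, ¬ f (T.l u) (T.l v))
    (hrl : ∀ u v, f (T.r u) (T.l v) ↔ u = v) (hlr : ∀ u v, f (T.l u) (T.r v) ↔ u = v) :
    LApp f g = g := by
  have hloop : ∀ x y,
      Relation.ReflTransGen (RComp (fun a b => f (T.l a) (T.l b)) g) x y ↔ y = x :=
    fun x _ => Relation.reflTransGen_iff_eq fun _ ⟨_, hll', _⟩ => hll _ _ hll'
  funext u v
  simp [LApp, RComp, hrr, hrl, hlr, hloop]

theorem fI_r_r (u v : T) : ¬ fI (T.r u) (T.r v) := by simp [fI]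

theorem fI_l_l (u v : T) : ¬ fI (T.l u) (T.l v) := by simp [fI]

theorem fI_r_l (u v : T) : fI (T.r u) (T.l v) ↔ u = v := by simp [fI, eq_comm]

theorem fI_l_r (u v : T) : fI (T.l u) (T.r v) ↔ u = v := by simp [fI, eq_comm]

theorem fI_realizes_I_general (a : T → T → Prop) :
    LApp fI a = a :=
  lApp_eq_self_of_components a fI_r_r fI_l_l fI_r_l fI_l_r

/-- `f_I` realizes the identity combinator: `f_I • a = a`. -/
theorem fI_realizes_I (a : T → T → Prop) (ha : PartialInjection a) :
    LApp fI a = a :=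
  fI_realizes_I_general a
end

section
/- The partial involution f_K realizes the affine K combinator: for all partial injective functions a and b on T, (f_K • a) • b = a. -/
/-- The partial involution realizing the affine `K` combinator: the symmetric closure of
`{(l(t), r(r(t))) | t ∈ T}`. -/
def fK : T → T → Prop := fun a b =>
  (∃ t, a = T.l t ∧ b = T.r (T.r t)) ∨ (∃ t, a = T.r (T.r t) ∧ b = T.l t)

lemma lApp_iff_of_forall_not_ll {f : T → T → Prop} (hf : ∀ x y, ¬ f (T.l x) (T.l y))
    (g : T → T → Prop) (u v : T) :
    LApp f g u v ↔ f (T.r u) (T.r v) ∨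
      RComp (fun a b => f (T.r a) (T.l b)) (RComp g (fun a b => f (T.l a) (T.r b))) u v := by
  have loop_trivial (y z : T) :
      Relation.ReflTransGen (RComp (fun a b => f (T.l a) (T.l b)) g) y z ↔ z = y :=
    Relation.reflTransGen_iff_eq fun _ ⟨_, hll, _⟩ => hf _ _ hll
  simp only [LApp, RComp, loop_trivial, exists_eq_left]

lemma lApp_iff_of_forall_not_rl {f : T → T → Prop} (hf : ∀ x y, ¬ f (T.r x) (T.l y))
    (g : T → T → Prop) (u v : T) :
    LApp f g u v ↔ f (T.r u) (T.r v) := by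
  simp only [LApp, RComp, hf, false_and, exists_false, or_false]

lemma fK_not_ll (x y : T) : ¬ fK (T.l x) (T.l y) := by
  rintro (⟨_, _, h⟩ | ⟨_, h, _⟩) <;> cases h

lemma lApp_fK_iff (a : T → T → Prop) (u v : T) :
    LApp fK a u v ↔ ∃ x, u = T.r x ∧ ∃ y, a x y ∧ v = T.r y := by
  rw [lApp_iff_of_forall_not_ll fK_not_ll]
  simp only [fK, RComp, reduceCtorEq, T.r.injEq, T.l.injEq, false_and, exists_false, and_false,
    or_self, and_self, exists_eq_right', false_or, exists_eq_left', or_false]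

lemma lApp_fK_not_rl (a : T → T → Prop) (x y : T) : ¬ LApp fK a (T.r x) (T.l y) := by
  rw [lApp_fK_iff]
  rintro ⟨_, _, _, _, h⟩
  cases h

theorem fK_realizes_K_general (a b : T → T → Prop) :
    LApp (LApp fK a) b = a := by
  funext u v
  apply propext
  simp only [lApp_iff_of_forall_not_rl (lApp_fK_not_rl a), lApp_fK_iff, T.r.injEq,
    exists_eq_left', exists_eq_right']

/-- `f_K` realizes the affine `K` combinator: `(f_K • a) • b = a`. -/
theorem fK_realizes_K (a b : T → T → Prop)
    (ha : PartialInjection a) (hb : PartialInjection b) :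
    LApp (LApp fK a) b = a :=
  fK_realizes_K_general a b
end

section
/- The partial involution f_B realizes the composition combinator B: for all partial injective functions a, b, c on T, ((f_B • a) • b) • c = a • (b • c). -/
/-- The partial involution realizing the composition combinator `B`: the symmetric closure of
`{(r(r(r(t))), l(r(t)))} ∪ {(l(l(t)), r(l(r(t))))} ∪ {(r(l(l(t))), r(r(l(t))))}`. -/
def fB : T → T → Prop := fun a b =>
  (∃ t, a = T.r (T.r (T.r t)) ∧ b = T.l (T.r t)) ∨
  (∃ t, a = T.l (T.r t) ∧ b = T.r (T.r (T.r t))) ∨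
  (∃ t, a = T.l (T.l t) ∧ b = T.r (T.l (T.r t))) ∨
  (∃ t, a = T.r (T.l (T.r t)) ∧ b = T.l (T.l t)) ∨
  (∃ t, a = T.r (T.l (T.l t)) ∧ b = T.r (T.r (T.l t))) ∨
  (∃ t, a = T.r (T.r (T.l t)) ∧ b = T.r (T.l (T.l t)))

/-!
Linear application is read as a token machine: in `f • g` a token enters `f` at `r u`, and each
time it leaves `f` on the left it passes through `g` and is fed back into `f`, until it leaves
`f` at `r v`. Evaluating `fB • a` explicitly, a token on either side of the equation, after
leaving `a` on the left, follows the same `Route`: it enters `b` on the right, and whenever it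
leaves `b` it goes back into `a` (through `r`) or through `c` into `b` again (through `l`).
-/

open T

/-- The tail `(f_ll ; g)* ; f_lr` of linear application, read from the point `y` where a token
leaves `g`: fed back into `f` at `l y`, it eventually leaves `f` at `r v`. -/
inductive Feedback (f g : T → T → Prop) (v : T) : T → Prop
  | exit {y} : f (l y) (r v) → Feedback f g v y
  | loop {y x y'} : f (l y) (l x) → g x y' → Feedback f g v y' → Feedback f g v y

theorem lapp_iff_feedback {f g : T → T → Prop} {u v : T} :
    LApp f g u v ↔ f (r u) (r v) ∨ ∃ x y, f (r u) (l x) ∧ g x y ∧ Feedback f g v y := by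
  have tail_iff : ∀ y, Feedback f g v y ↔
      ∃ z, Relation.ReflTransGen (RComp (fun a b => f (l a) (l b)) g) y z ∧ f (l z) (r v) := by
    refine fun y => ⟨fun h => ?_, ?_⟩
    · induction h with
      | exit h => exact ⟨_, .refl, h⟩
      | loop hf hg _ ih =>
        obtain ⟨z, hyz, hz⟩ := ih
        exact ⟨z, .head ⟨_, hf, hg⟩ hyz, hz⟩
    · rintro ⟨z, hyz, hz⟩
      induction hyz using Relation.ReflTransGen.head_induction_on with
      | refl => exact .exit hz
      | head hstep _ ih =>
        obtain ⟨x, hf, hg⟩ := hstep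
        exact .loop hf hg ih
  simp only [LApp, RComp, tail_iff]
  aesop

theorem feedback_fB_iff {g : T → T → Prop} {v y : T} : Feedback fB g v y ↔ fB (l y) (r v) :=
  ⟨fun | .exit h => h | .loop hf _ _ => by simp [fB] at hf, .exit⟩

def fBApp (a : T → T → Prop) : T → T → Prop
  | l (l t), w => w = r (l t)
  | r (l t), w => w = l (l t)
  | r (r t), w => ∃ s, (w = r (r s) ∧ a (r t) (r s)) ∨ (w = l (r s) ∧ a (r t) (l s))
  | l (r t), w => ∃ s, (w = r (r s) ∧ a (l t) (r s)) ∨ (w = l (r s) ∧ a (l t) (l s))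
  | _, _ => False

theorem lapp_fB (a : T → T → Prop) : LApp fB a = fBApp a := by
  ext u v
  simp only [lapp_iff_feedback, feedback_fB_iff]
  rcases u with _ | (_ | u | u | _) | (_ | u | u | _) | _ <;>
    simp [fB, fBApp, and_or_left, exists_or, and_comm]

/-- The path of a token after it leaves `b` at `y`: through `r` it re-enters `a` on the left,
through `l` it enters `c`, and it ends when it leaves `a` at `r v`. -/
inductive Route (a b c : T → T → Prop) (v : T) : T → Prop
  | exit {t} : a (l t) (r v) → Route a b c v (r t)
  | throughA {t g y} : a (l t) (l g) → b (r g) y → Route a b c v y → Route a b c v (r t)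
  | throughC {x d y} : c x d → b (l d) y → Route a b c v y → Route a b c v (l x)

section Route

variable {a b c : T → T → Prop} {v : T}

theorem Feedback.route_l {w y : T} (h : Feedback b c w y) (hw : Route a b c v (r w)) {x : T}
    (hc : c x y) : Route a b c v (l x) := by
  induction h generalizing x with
  | exit hb => exact .throughC hc hb hw
  | loop hb hc' _ ih => exact .throughC hc hb (ih hc')

theorem exists_route_of_lapp {g w : T} (hG : LApp b c g w) (hw : Route a b c v (r w)) :
    ∃ y, b (r g) y ∧ Route a b c v y := by
  rcases lapp_iff_feedback.mp hG with hb | ⟨x, d, hb, hc, hF⟩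
  · exact ⟨_, hb, hw⟩
  · exact ⟨_, hb, hF.route_l hw hc⟩

theorem Feedback.route_of_lapp {t : T} (h : Feedback a (LApp b c) v t) : Route a b c v (r t) := by
  induction h with
  | exit ha => exact .exit ha
  | loop ha hG _ ih =>
    obtain ⟨y, hb, hy⟩ := exists_route_of_lapp hG ih
    exact .throughA ha hb hy

/-- How `a • (b • c)` sees a `Route`: from `r t` the token is in the feedback loop of `a`,
from `l x` it is inside `b • c`, which it leaves to re-enter `a` at `l w`. -/
def RouteRHS (a b c : T → T → Prop) (v : T) : T → Prop
  | r t => Feedback a (LApp b c) v t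
  | l x => ∃ w d, c x d ∧ Feedback b c w d ∧ Feedback a (LApp b c) v w
  | _ => False

theorem exists_lapp_of_routeRHS {g y : T} (hb : b (r g) y) (hy : RouteRHS a b c v y) :
    ∃ w, LApp b c g w ∧ Feedback a (LApp b c) v w := by
  rcases y with _ | x | w | _
  · exact hy.elim
  · obtain ⟨w, d, hc, hF, hFa⟩ := hy
    exact ⟨w, lapp_iff_feedback.mpr (.inr ⟨x, d, hb, hc, hF⟩), hFa⟩
  · exact ⟨w, lapp_iff_feedback.mpr (.inl hb), hy⟩
  · exact hy.elim

theorem Route.routeRHS {y : T} (h : Route a b c v y) : RouteRHS a b c v y := by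
  induction h with
  | exit ha => exact .exit ha
  | throughA ha hb _ ih =>
    obtain ⟨w, hG, hF⟩ := exists_lapp_of_routeRHS hb ih
    exact .loop ha hG hF
  | @throughC x d y hc hb _ ih =>
    rcases y with _ | x' | w | _
    · exact ih.elim
    · obtain ⟨w, d', hc', hF, hFa⟩ := ih
      exact ⟨w, d, hc, .loop hb hc' hF, hFa⟩
    · exact ⟨w, d, hc, .exit hb, ih⟩
    · exact ih.elim

theorem lapp_lapp_iff_route {u : T} : LApp a (LApp b c) u v ↔
    a (r u) (r v) ∨ ∃ g y, a (r u) (l g) ∧ b (r g) y ∧ Route a b c v y := by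
  rw [lapp_iff_feedback]
  refine or_congr_right ⟨fun ⟨g, w, ha, hG, hF⟩ => ?_, fun ⟨g, y, ha, hb, hy⟩ => ?_⟩
  · obtain ⟨y, hb, hy⟩ := exists_route_of_lapp hG hF.route_of_lapp
    exact ⟨g, y, ha, hb, hy⟩
  · obtain ⟨w, hG, hF⟩ := exists_lapp_of_routeRHS hb hy.routeRHS
    exact ⟨g, w, ha, hG, hF⟩

end Route

section FBApp

variable {a b c : T → T → Prop} {v : T}

theorem lapp_fBApp_l {x q : T} :
    LApp (fBApp a) b (l x) q ↔ ∃ y, b (l x) y ∧ Feedback (fBApp a) b q y := by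
  simp [lapp_iff_feedback, fBApp]

theorem lapp_fBApp_r {u q : T} : LApp (fBApp a) b (r u) q ↔
    (∃ s, q = r s ∧ a (r u) (r s)) ∨
      ∃ s y, a (r u) (l s) ∧ b (r s) y ∧ Feedback (fBApp a) b q y := by
  simp [lapp_iff_feedback, fBApp]

theorem Feedback.route_of_fBApp {w y : T} (h : Feedback (fBApp a) b w y)
    (hw : w = r v ∨ ∃ x, w = l x ∧ Route a b c v (l x)) : Route a b c v y := by
  induction h with
  | @exit y hD =>
    rcases y with _ | t | t | _ <;>
      simp only [fBApp, r.injEq, reduceCtorEq, false_and, or_false] at hD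
    · subst hD
      simpa using hw
    · obtain ⟨s, rfl, ha⟩ := hD
      obtain rfl : s = v := by simpa using hw
      exact .exit ha
  | @loop y x y' hD hb _ ih =>
    rcases y with _ | t | t | _ <;>
      simp only [fBApp, l.injEq, reduceCtorEq, false_and, false_or] at hD
    · obtain ⟨s, rfl, ha⟩ := hD
      exact .throughA ha hb ih

theorem Feedback.route_of_lapp_fBApp {d : T} (h : Feedback (LApp (fBApp a) b) c v d) {x : T}
    (hc : c x d) : Route a b c v (l x) := by
  induction h generalizing x with
  | exit hE =>
    obtain ⟨y, hb, hF⟩ := lapp_fBApp_l.mp hE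
    exact .throughC hc hb (hF.route_of_fBApp (.inl rfl))
  | loop hE hc' _ ih =>
    obtain ⟨y, hb, hF⟩ := lapp_fBApp_l.mp hE
    exact .throughC hc hb (hF.route_of_fBApp (.inr ⟨_, rfl, ih hc'⟩))

theorem Route.exists_feedback_fBApp {y : T} (h : Route a b c v y) :
    ∃ w, Feedback (fBApp a) b w y ∧
      (w = r v ∨ ∃ x d, w = l x ∧ c x d ∧ Feedback (LApp (fBApp a) b) c v d) := by
  induction h with
  | exit ha => exact ⟨r v, .exit ⟨v, .inl ⟨rfl, ha⟩⟩, .inl rfl⟩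
  | throughA ha hb _ ih =>
    obtain ⟨w, hF, hw⟩ := ih
    exact ⟨w, .loop ⟨_, .inr ⟨rfl, ha⟩⟩ hb hF, hw⟩
  | @throughC x d y hc hb _ ih =>
    obtain ⟨w, hF, hw⟩ := ih
    have hE : LApp (fBApp a) b (l d) w := lapp_fBApp_l.mpr ⟨y, hb, hF⟩
    refine ⟨l x, .exit rfl, .inr ⟨x, d, rfl, hc, ?_⟩⟩
    rcases hw with rfl | ⟨x', d', rfl, hc', hF'⟩
    · exact .exit hE
    · exact .loop hE hc' hF'

theorem lapp_lapp_fBApp_iff_route {u : T} : LApp (LApp (fBApp a) b) c u v ↔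
    a (r u) (r v) ∨ ∃ g y, a (r u) (l g) ∧ b (r g) y ∧ Route a b c v y := by
  simp only [lapp_iff_feedback (f := LApp (fBApp a) b), lapp_fBApp_r]
  constructor
  · rintro ((⟨s, ⟨⟩, ha⟩ | ⟨g, y, ha, hb, hF⟩) |
      ⟨x, d, (⟨s, ⟨⟩, _⟩ | ⟨g, y, ha, hb, hF⟩), hc, hFE⟩)
    · exact .inl ha
    · exact .inr ⟨g, y, ha, hb, hF.route_of_fBApp (.inl rfl)⟩
    · exact .inr ⟨g, y, ha, hb,
        hF.route_of_fBApp (.inr ⟨x, rfl, hFE.route_of_lapp_fBApp hc⟩)⟩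
  · rintro (ha | ⟨g, y, ha, hb, hy⟩)
    · exact .inl (.inl ⟨v, rfl, ha⟩)
    · obtain ⟨w, hF, rfl | ⟨x, d, rfl, hc, hFE⟩⟩ := hy.exists_feedback_fBApp
      · exact .inl (.inr ⟨g, y, ha, hb, hF⟩)
      · exact .inr ⟨x, d, .inr ⟨g, y, ha, hb, hF⟩, hc, hFE⟩

end FBApp

theorem fB_realizes_B_general (a b c : T → T → Prop) :
    LApp (LApp (LApp fB a) b) c = LApp a (LApp b c) := by
  ext u v
  rw [lapp_fB, lapp_lapp_fBApp_iff_route, lapp_lapp_iff_route]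

/-- `f_B` realizes the composition combinator: `((f_B • a) • b) • c = a • (b • c)`. -/
theorem fB_realizes_B (a b c : T → T → Prop)
    (ha : PartialInjection a) (hb : PartialInjection b) (hc : PartialInjection c) :
    LApp (LApp (LApp fB a) b) c = LApp a (LApp b c) :=
  fB_realizes_B_general a b c
end

section
/- The partial involution f_C realizes the exchange combinator C: for all partial injective functions a, b, c on T, ((f_C • a) • b) • c = (a • c) • b. -/
/-- The partial involution realizing the exchange combinator `C`: the symmetric closure of
`{(l(l(t)), r(r(l(t))))} ∪ {(l(r(l(t))), r(l(t)))} ∪ {(l(r(r(t))), r(r(r(t))))}`. -/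
def fC : T → T → Prop := fun a b =>
  (∃ t, a = T.l (T.l t) ∧ b = T.r (T.r (T.l t))) ∨
  (∃ t, a = T.r (T.r (T.l t)) ∧ b = T.l (T.l t)) ∨
  (∃ t, a = T.l (T.r (T.l t)) ∧ b = T.r (T.l t)) ∨
  (∃ t, a = T.r (T.l t) ∧ b = T.l (T.r (T.l t))) ∨
  (∃ t, a = T.l (T.r (T.r t)) ∧ b = T.r (T.r (T.r t))) ∨
  (∃ t, a = T.r (T.r (T.r t)) ∧ b = T.l (T.r (T.r t)))

/-!
Linear application is an execution formula: `f • g` relates `u` to `v` iff some `f`-path leads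
from `r u` to `r v`, interleaved with `g`-steps acting under `l`. Executing a relation seen through
a renaming of addresses is the renaming of the execution, and `f_C` is such a renaming
(`l t ↔ r (l t)`, `r (r t)` fixed). Hence both `((f_C • a) • b) • c` and `(a • c) • b` relate `u`
to `v` iff an `a`-path leads from `r (r u)` to `r (r v)`, interleaved with `β`-steps (`b` under
`r ∘ l`) and `γ`-steps (`c` under `l`): on the left in the pattern `a (β a)* (γ a (β a)*)*`, on the
right with `β` and `γ` exchanged. Kleene's denesting `(x ⊔ y)* = x* (y x*)*` turns both into
`a (β a ⊔ γ a)*`.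
-/

namespace Relation

variable {α β γ : Type*}

def Exec (f s : α → α → Prop) : α → α → Prop :=
  Comp f (ReflTransGen (Comp s f))

def Pullback (E : α → β → Prop) (Y : β → β → Prop) : α → α → Prop :=
  fun x y => ∃ x' y', E x x' ∧ E y y' ∧ Y x' y'

theorem reflTransGen_sup (x y : α → α → Prop) :
    ReflTransGen (x ⊔ y) = Comp (ReflTransGen x) (ReflTransGen (Comp y (ReflTransGen x))) := by
  ext u v
  constructor
  · intro h
    induction h using ReflTransGen.head_induction_on with
    | refl => exact ⟨v, .refl, .refl⟩
    | head hstep _ ih =>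
      obtain ⟨k, hk, hkv⟩ := ih
      rcases hstep with hx | hy
      · exact ⟨k, .head hx hk, hkv⟩
      · exact ⟨_, .refl, .head ⟨_, hy, hk⟩ hkv⟩
  · rintro ⟨m, hum, hmv⟩
    have hx : ReflTransGen x ≤ ReflTransGen (x ⊔ y) := ReflTransGen.mono le_sup_left
    refine (hx _ _ hum).trans ?_
    induction hmv with
    | refl => exact .refl
    | tail _ h ih =>
      obtain ⟨k, hk, hk'⟩ := h
      exact ih.trans (.head (Or.inr hk) (hx _ _ hk'))

theorem exec_exec (f s t : α → α → Prop) :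
    Exec (Exec f s) t = Comp f (ReflTransGen (Comp s f ⊔ Comp t f)) := by
  rw [Exec, Exec, comp_assoc, ← comp_assoc (r := t), reflTransGen_sup]

theorem exec_exec_comm (f s t : α → α → Prop) : Exec (Exec f s) t = Exec (Exec f t) s := by
  rw [exec_exec, exec_exec, sup_comm]

theorem Exec.tail {f s : α → α → Prop} {x y z : α} (hxy : Exec f s x y) (hyz : Comp s f y z) :
    Exec f s x z :=
  let ⟨w, hxw, hwy⟩ := hxy
  ⟨w, hxw, hwy.tail hyz⟩

theorem pullback_pullback (E : α → β → Prop) (F : β → γ → Prop) (Y : γ → γ → Prop) :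
    Pullback E (Pullback F Y) = Pullback (Comp E F) Y := by
  ext x y
  constructor
  · rintro ⟨x', y', hx, hy, x'', y'', hx', hy', hY⟩
    exact ⟨x'', y'', ⟨x', hx, hx'⟩, ⟨y', hy, hy'⟩, hY⟩
  · rintro ⟨x'', y'', ⟨x', hx, hx'⟩, ⟨y', hy, hy'⟩, hY⟩
    exact ⟨x', y', hx, hy, x'', y'', hx', hy', hY⟩

theorem exec_pullback_map {E : α → β → Prop} {ι : γ → α} {κ : γ → β}
    (hE : ∀ p y, E (ι p) y ↔ y = κ p) (Y : β → β → Prop) (g : γ → γ → Prop) :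
    Exec (Pullback E Y) (Relation.Map g ι ι) = Pullback E (Exec Y (Relation.Map g κ κ)) := by
  ext x z
  constructor
  · rintro ⟨x₁, ⟨x', x₁', hx, hx₁, hY⟩, hstar⟩
    induction hstar with
    | refl => exact ⟨x', x₁', hx, hx₁, x₁', hY, .refl⟩
    | tail _ hstep ih =>
      obtain ⟨_, ⟨p, q, hpq, rfl, rfl⟩, q', z', hq, hz, hY'⟩ := hstep
      obtain ⟨x'', y', hx', hy, hexec⟩ := ih
      rw [hE] at hy hq
      subst hy hq
      exact ⟨x'', z', hx', hz, hexec.tail ⟨κ q, ⟨p, q, hpq, rfl, rfl⟩, hY'⟩⟩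
  · rintro ⟨x', z', hx, hz, w, hw, hstar⟩
    -- the invariant covers every `E`-preimage of the endpoint, since the next step starts at `ι p`
    induction hstar generalizing z with
    | refl => exact ⟨z, ⟨x', w, hx, hz, hw⟩, .refl⟩
    | tail _ hstep ih =>
      obtain ⟨_, ⟨p, q, hpq, rfl, rfl⟩, hY'⟩ := hstep
      exact (ih _ ((hE p _).2 rfl)).tail
        ⟨ι q, ⟨p, q, hpq, rfl, rfl⟩, κ q, _, (hE q _).2 rfl, hz, hY'⟩

theorem reflTransGen_comp_map_iff {f : α → α → Prop} {g : γ → γ → Prop} {ι : γ → α}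
    (w₀ w : α) :
    ReflTransGen (Comp (Relation.Map g ι ι) f) w₀ w ↔
      w = w₀ ∨
        ∃ x, w₀ = ι x ∧ Comp (Exec g fun a b => f (ι a) (ι b)) (fun z w => f (ι z) w) x w := by
  constructor
  · intro h
    induction h using ReflTransGen.head_induction_on with
    | refl => exact .inl rfl
    | head hstep _ ih =>
      obtain ⟨_, ⟨x, y, hxy, rfl, rfl⟩, hy⟩ := hstep
      refine .inr ⟨x, rfl, ?_⟩
      rcases ih with rfl | ⟨x', rfl, z, ⟨y', hxy', hstar⟩, hz⟩
      · exact ⟨y, ⟨y, hxy, .refl⟩, hy⟩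
      · exact ⟨z, ⟨y, hxy, .head ⟨x', hy, hxy'⟩ hstar⟩, hz⟩
  · rintro (rfl | ⟨x, rfl, z, ⟨y, hxy, hstar⟩, hz⟩)
    · exact .refl
    induction hstar using ReflTransGen.head_induction_on generalizing x with
    | refl => exact .single ⟨_, ⟨x, _, hxy, rfl, rfl⟩, hz⟩
    | head hstep _ ih =>
      obtain ⟨x', hyx', hx'⟩ := hstep
      exact .head ⟨ι _, ⟨x, _, hxy, rfl, rfl⟩, hyx'⟩ (ih x' hx')

end Relation

open Relation

theorem lApp_eq_pullback_exec (f g : T → T → Prop) :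
    LApp f g = Pullback (T.r · = ·) (Exec f (Relation.Map g T.l T.l)) := by
  ext u v
  simp only [Pullback, exists_and_left, exists_eq_left', Exec, Comp, reflTransGen_comp_map_iff]
  constructor
  · rintro (h | ⟨x, hx, y, hy, z, hz, hzv⟩)
    · exact ⟨_, h, .inl rfl⟩
    · exact ⟨_, hx, .inr ⟨x, rfl, z, ⟨y, hy, hz⟩, hzv⟩⟩
  · rintro ⟨w, hw, rfl | ⟨x, rfl, z, ⟨y, hy, hz⟩, hzv⟩⟩
    · exact .inl hw
    · exact .inr ⟨x, hw, y, hy, z, hz, hzv⟩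

theorem lApp_lApp_eq_pullback_exec (a c b : T → T → Prop) :
    LApp (LApp a c) b =
      Pullback (fun u x => T.r (T.r u) = x)
        (Exec (Exec a (Relation.Map c T.l T.l))
          (Relation.Map b (fun p => T.r (T.l p)) (fun p => T.r (T.l p)))) := by
  rw [lApp_eq_pullback_exec a c, lApp_eq_pullback_exec,
    exec_pullback_map (E := (T.r · = ·)) (κ := fun p => T.r (T.l p)) fun _ _ => eq_comm,
    pullback_pullback, fun_eq_comp]

theorem fC_symm {x y : T} : fC x y → fC y x := by
  rintro (⟨t, rfl, rfl⟩ | ⟨t, rfl, rfl⟩ | ⟨t, rfl, rfl⟩ | ⟨t, rfl, rfl⟩ | ⟨t, rfl, rfl⟩ |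
    ⟨t, rfl, rfl⟩) <;> simp [fC]

theorem not_fC_r_r (u v : T) : ¬ fC (T.r u) (T.r v) := by
  simp [fC]

theorem not_fC_l_l (u v : T) : ¬ fC (T.l u) (T.l v) := by
  simp [fC]

theorem lApp_fC (a : T → T → Prop) :
    LApp fC a = Pullback (fun u x => fC (T.r u) (T.l x)) a := by
  ext u v
  have hll (y z : T) : ReflTransGen (RComp (fun a b => fC (T.l a) (T.l b)) a) y z ↔ z = y :=
    reflTransGen_iff_eq fun _ ⟨_, h, _⟩ => not_fC_l_l _ _ h
  simp only [LApp, RComp, hll, not_fC_r_r, false_or, Pullback, exists_eq_left]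
  constructor
  · rintro ⟨x, hx, y, hxy, hy⟩
    exact ⟨x, y, hx, fC_symm hy, hxy⟩
  · rintro ⟨x, y, hx, hy, hxy⟩
    exact ⟨x, hx, y, hxy, fC_symm hy⟩

theorem lApp_lApp_fC (a b : T → T → Prop) :
    LApp (LApp fC a) b =
      Pullback (fun u x => fC (T.r (T.r u)) (T.l x))
        (Exec a (Relation.Map b (fun p => T.r (T.l p)) (fun p => T.r (T.l p)))) := by
  have hswap (p y : T) : fC (T.r (T.l p)) (T.l y) ↔ y = T.r (T.l p) := by simp [fC]
  rw [lApp_fC, lApp_eq_pullback_exec,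
    exec_pullback_map (E := fun u x => fC (T.r u) (T.l x)) hswap, pullback_pullback, fun_eq_comp]

theorem fC_realizes_C_general (a b c : T → T → Prop) :
    LApp (LApp (LApp fC a) b) c = LApp (LApp a c) b := by
  have hback (p y : T) : fC (T.r (T.r (T.l p))) (T.l y) ↔ y = T.l p := by simp [fC]
  have hfix : (fun u x => fC (T.r (T.r (T.r u))) (T.l x)) = (fun u x => T.r (T.r u) = x) := by
    ext u x
    simp [fC, eq_comm]
  rw [lApp_lApp_fC, lApp_eq_pullback_exec,
    exec_pullback_map (E := fun u x => fC (T.r (T.r u)) (T.l x)) hback, pullback_pullback,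
    fun_eq_comp, hfix, lApp_lApp_eq_pullback_exec, exec_exec_comm]

/-- `f_C` realizes the exchange combinator: `((f_C • a) • b) • c = (a • c) • b`. -/
theorem fC_realizes_C (a b c : T → T → Prop)
    (ha : PartialInjection a) (hb : PartialInjection b) (hc : PartialInjection c) :
    LApp (LApp (LApp fC a) b) c = LApp (LApp a c) b :=
  fC_realizes_C_general a b c
end

section
/- The partial involution f_D realizes the dereliction combinator: for every partial injective function a on T, f_D • (!a) = a. -/
/-- The partial involution realizing the dereliction combinator `D`: the symmetric closure of
`{(l(p(ε,t)), r(t)) | t ∈ T}`. -/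
def fD : T → T → Prop := fun a b =>
  (∃ t, a = T.l (T.p T.eps t) ∧ b = T.r t) ∨
  (∃ t, a = T.r t ∧ b = T.l (T.p T.eps t))

/-! Since `f_D` has no `r`–`r` and no `l`–`l` pairs, the loop `(f_ll ; g)*` of linear application
is the identity and `f_D • g = f_rl ; g ; f_lr`. Here `f_rl` sends `u` to `p(ε,u)`, which `!a`
relates exactly to the `p(ε,v)` with `(u,v) ∈ a`, and `f_lr` sends `p(ε,v)` back to `v`. -/

theorem lApp_eq_of_forall_not_rr_ll {f : T → T → Prop} (g : T → T → Prop)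
    (hrr : ∀ u v, ¬ f (T.r u) (T.r v)) (hll : ∀ u v, ¬ f (T.l u) (T.l v)) :
    LApp f g = RComp (fun a b => f (T.r a) (T.l b)) (RComp g (fun a b => f (T.l a) (T.r b))) := by
  have hloop : ∀ x y, Relation.ReflTransGen (RComp (fun a b => f (T.l a) (T.l b)) g) x y ↔ y = x :=
    fun x _ => Relation.reflTransGen_iff_eq fun _ ⟨w, hw, _⟩ => hll x w hw
  funext u v
  simp only [LApp, RComp, hrr, hloop, false_or, exists_eq_left]

theorem repl_p_p {a : T → T → Prop} {t t' u v : T} :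
    Repl a (T.p t u) (T.p t' v) ↔ t = t' ∧ a u v := by
  simp [Repl, and_comm, and_left_comm, eq_comm]

theorem fD_r_r (u v : T) : ¬ fD (T.r u) (T.r v) := by
  simp [fD]

theorem fD_l_l (u v : T) : ¬ fD (T.l u) (T.l v) := by
  simp [fD]

theorem fD_r_l {u w : T} : fD (T.r u) (T.l w) ↔ w = T.p T.eps u := by
  simp [fD, eq_comm]

theorem fD_l_r {w v : T} : fD (T.l w) (T.r v) ↔ w = T.p T.eps v := by
  simp [fD]

theorem fD_realizes_D_general (a : T → T → Prop) :
    LApp fD (Repl a) = a := by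
  rw [lApp_eq_of_forall_not_rr_ll _ fD_r_r fD_l_l]
  funext u v
  simp only [RComp, fD_r_l, fD_l_r, exists_eq_left, exists_eq_right, repl_p_p, true_and]

/-- `f_D` realizes the dereliction combinator: `f_D • (!a) = a`. -/
theorem fD_realizes_D (a : T → T → Prop) (ha : PartialInjection a) :
    LApp fD (Repl a) = a :=
  fD_realizes_D_general a
end

section
/- The partial involution f_δ realizes the comultiplication combinator: for every partial injective function a on T, f_δ • (!a) = !(!a). -/
/-- The partial involution realizing the comultiplication combinator `δ`: the symmetric
closure of `{(l(p(p(t,u),v)), r(p(t,p(u,v)))) | t,u,v ∈ T}`. -/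
def fDelta : T → T → Prop := fun a b =>
  (∃ t u v, a = T.l (T.p (T.p t u) v) ∧ b = T.r (T.p t (T.p u v))) ∨
  (∃ t u v, a = T.r (T.p t (T.p u v)) ∧ b = T.l (T.p (T.p t u) v))

/-- Without `(l, l)` pairs the feedback loop `(f_ll ; g)*` collapses to the identity. -/
theorem LApp_eq_of_forall_not_l_l {f : T → T → Prop} (hf : ∀ x y, ¬ f (T.l x) (T.l y))
    (g : T → T → Prop) :
    LApp f g = fun u v => f (T.r u) (T.r v) ∨
      RComp (fun a b => f (T.r a) (T.l b)) (RComp g (fun a b => f (T.l a) (T.r b))) u v := by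
  have loop_eq : ∀ x y,
      Relation.ReflTransGen (RComp (fun a b => f (T.l a) (T.l b)) g) x y ↔ y = x :=
    fun x _ => Relation.reflTransGen_iff_eq fun _ ⟨_, hxy, _⟩ => hf x _ hxy
  funext u v
  simp only [LApp, RComp, loop_eq, exists_eq_left]

theorem fDelta_l_l (x y : T) : ¬ fDelta (T.l x) (T.l y) := by
  rintro (⟨t, u, v, -, h⟩ | ⟨t, u, v, h, -⟩) <;> cases h

theorem fDelta_r_r (x y : T) : ¬ fDelta (T.r x) (T.r y) := by
  rintro (⟨t, u, v, h, -⟩ | ⟨t, u, v, -, h⟩) <;> cases h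

theorem fDelta_r_l_iff (x y : T) :
    fDelta (T.r x) (T.l y) ↔ ∃ t u v, x = T.p t (T.p u v) ∧ y = T.p (T.p t u) v := by
  simp [fDelta]

theorem fDelta_l_r_iff (x y : T) :
    fDelta (T.l x) (T.r y) ↔ ∃ t u v, x = T.p (T.p t u) v ∧ y = T.p t (T.p u v) := by
  simp [fDelta]

/-- `f_δ • g` is `g` conjugated by the associator `p(t, p(u, v)) ↦ p(p(t, u), v)`. -/
theorem LApp_fDelta_iff (g : T → T → Prop) (x y : T) :
    LApp fDelta g x y ↔ ∃ t u v t' u' v', g (T.p (T.p t u) v) (T.p (T.p t' u') v') ∧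
      x = T.p t (T.p u v) ∧ y = T.p t' (T.p u' v') := by
  rw [LApp_eq_of_forall_not_l_l fDelta_l_l]
  simp only [fDelta_r_r, false_or, RComp, fDelta_r_l_iff, fDelta_l_r_iff]
  constructor
  · rintro ⟨_, ⟨t, u, v, rfl, rfl⟩, _, hg, t', u', v', rfl, rfl⟩
    exact ⟨t, u, v, t', u', v', hg, rfl, rfl⟩
  · rintro ⟨t, u, v, t', u', v', hg, rfl, rfl⟩
    exact ⟨_, ⟨t, u, v, rfl, rfl⟩, _, hg, t', u', v', rfl, rfl⟩

theorem Repl_p_p_iff (g : T → T → Prop) (t t' u u' : T) :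
    Repl g (T.p t u) (T.p t' u') ↔ t = t' ∧ g u u' := by
  simp [Repl, eq_comm, and_comm]

theorem fDelta_realizes_delta_general (a : T → T → Prop) :
    LApp fDelta (Repl a) = Repl (Repl a) := by
  funext x y
  simp only [LApp_fDelta_iff, Repl_p_p_iff, T.p.injEq, eq_iff_iff]
  constructor
  · rintro ⟨t, u, v, _, _, v', ⟨⟨rfl, rfl⟩, hv⟩, rfl, rfl⟩
    exact ⟨t, _, _, ⟨u, v, v', hv, rfl, rfl⟩, rfl, rfl⟩
  · rintro ⟨t, _, _, ⟨u, v, v', hv, rfl, rfl⟩, rfl, rfl⟩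
    exact ⟨t, u, v, t, u, v', ⟨⟨rfl, rfl⟩, hv⟩, rfl, rfl⟩

/-- `f_δ` realizes the comultiplication combinator: `f_δ • (!a) = !(!a)`. -/
theorem fDelta_realizes_delta (a : T → T → Prop) (ha : PartialInjection a) :
    LApp fDelta (Repl a) = Repl (Repl a) :=
  fDelta_realizes_delta_general a
end

section
/- The partial involution f_W realizes the contraction combinator: for all partial injective functions a and b on T, (f_W • a) • (!b) = (a • (!b)) • (!b). -/
/-- The partial involution realizing the contraction combinator `W`: the symmetric closure of
`{(r(r(t)), l(r(r(t))))} ∪ {(l(l(p(t,u))), r(l(p(l(t),u))))} ∪ {(l(r(l(p(t,u)))), r(l(p(r(t),u))))}`. -/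
def fW : T → T → Prop := fun a b =>
  (∃ t, a = T.r (T.r t) ∧ b = T.l (T.r (T.r t))) ∨
  (∃ t, a = T.l (T.r (T.r t)) ∧ b = T.r (T.r t)) ∨
  (∃ t u, a = T.l (T.l (T.p t u)) ∧ b = T.r (T.l (T.p (T.l t) u))) ∨
  (∃ t u, a = T.r (T.l (T.p (T.l t) u)) ∧ b = T.l (T.l (T.p t u))) ∨
  (∃ t u, a = T.l (T.r (T.l (T.p t u))) ∧ b = T.r (T.l (T.p (T.r t) u))) ∨
  (∃ t u, a = T.r (T.l (T.p (T.r t) u)) ∧ b = T.l (T.r (T.l (T.p t u))))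

/-!
If `F = N ; A ; N⁻¹` for some relation `N` translating addresses, then, read through the
`r`-part of `N`, `F • g` is `A ; (β ; A)*` with `β` the conjugate of `g` by the `l`-part of `N`:
this is the sliding rule `X ; (Y ; X)* = (X ; Y)* ; X`. Since `f_W • a` is `a` conjugated by
`fWrl`, the left side becomes `a ; ((β_l ∪ β_r) ; a)*`, where `β_l` and `β_r` are the copies of
`!b` acting on `l`- and on `r l`-addresses. Applying the same rule twice, the right side becomes
`a' ; (β_r ; a')*` with `a' = a ; (β_l ; a)*`, and the two agree by the denesting rule
`(P ∪ Q)* = P* ; (Q ; P*)*`.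
-/

local infixr:80 " ∘r " => Relation.Comp

namespace Relation

variable {α : Type*} {r p q : α → α → Prop}

theorem sup_comp : (p ⊔ q) ∘r r = p ∘r r ⊔ q ∘r r := by
  ext a c
  simp only [Comp, Pi.sup_apply, sup_Prop_eq, or_and_right, exists_or]

theorem comp_sup : r ∘r (p ⊔ q) = r ∘r p ⊔ r ∘r q := by
  ext a c
  simp only [Comp, Pi.sup_apply, sup_Prop_eq, and_or_left, exists_or]

theorem bot_comp : (⊥ : α → α → Prop) ∘r r = ⊥ := by
  ext a c
  simp [Comp]

theorem reflTransGen_bot : ReflTransGen (⊥ : α → α → Prop) = (· = ·) := by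
  ext a b
  rw [reflTransGen_iff_eq fun _ h => h, eq_comm]

theorem reflTransGen_eq_sup_reflTransGen_comp :
    ReflTransGen r = (· = ·) ⊔ ReflTransGen r ∘r r := by
  ext a b
  rw [ReflTransGen.cases_tail_iff, eq_comm]
  rfl

theorem comp_reflTransGen_comp_comm :
    r ∘r ReflTransGen (p ∘r r) = ReflTransGen (r ∘r p) ∘r r := by
  ext a c
  constructor
  · rintro ⟨b, hab, hbc⟩
    induction hbc using ReflTransGen.head_induction_on generalizing a with
    | refl => exact ⟨a, .refl, hab⟩
    | head hstep _ ih =>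
        obtain ⟨m, hbm, hmd⟩ := hstep
        obtain ⟨e, hae, hec⟩ := ih _ hmd
        exact ⟨e, .head ⟨_, hab, hbm⟩ hae, hec⟩
  · rintro ⟨b, hab, hbc⟩
    induction hab generalizing c with
    | refl => exact ⟨c, hbc, .refl⟩
    | tail _ hstep ih =>
        obtain ⟨m, hbm, hmd⟩ := hstep
        obtain ⟨e, hae, hec⟩ := ih _ hbm
        exact ⟨e, hae, hec.tail ⟨_, hmd, hbc⟩⟩

theorem reflTransGen_sup_s10 :
    ReflTransGen (p ⊔ q) = ReflTransGen p ∘r ReflTransGen (q ∘r ReflTransGen p) := by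
  ext a c
  constructor
  · intro h
    induction h using ReflTransGen.head_induction_on with
    | refl => exact ⟨c, .refl, .refl⟩
    | head hstep _ ih =>
        obtain ⟨z, hz1, hz2⟩ := ih
        rcases hstep with hp | hq
        · exact ⟨z, .head hp hz1, hz2⟩
        · exact ⟨_, .refl, .head ⟨_, hq, hz1⟩ hz2⟩
  · rintro ⟨b, hab, hbc⟩
    refine (ReflTransGen.mono (fun _ _ => Or.inl) _ _ hab).trans ?_
    induction hbc with
    | refl => exact .refl
    | tail _ hstep ih =>
        obtain ⟨m, hq, hp⟩ := hstep
        exact ih.trans (.head (Or.inr hq) (ReflTransGen.mono (fun _ _ => Or.inl) _ _ hp))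

theorem comp_reflTransGen_sup_comp {A : α → α → Prop} :
    A ∘r ReflTransGen ((p ⊔ q) ∘r A) =
      (A ∘r ReflTransGen (p ∘r A)) ∘r ReflTransGen (q ∘r A ∘r ReflTransGen (p ∘r A)) := by
  rw [sup_comp, reflTransGen_sup_s10, comp_assoc, comp_assoc]

end Relation

open Relation

theorem lApp_eq_sup (F g : T → T → Prop) :
    LApp F g = (fun u v => F (T.r u) (T.r v)) ⊔
      (fun u v => F (T.r u) (T.l v)) ∘r g ∘r
        ReflTransGen ((fun u v => F (T.l u) (T.l v)) ∘r g) ∘r fun u v => F (T.l u) (T.r v) :=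
  rfl

theorem lApp_of_bipartite {F M g : T → T → Prop}
    (hrr : (fun u v => F (T.r u) (T.r v)) = ⊥) (hll : (fun u v => F (T.l u) (T.l v)) = ⊥)
    (hrl : (fun u v => F (T.r u) (T.l v)) = M) (hlr : (fun u v => F (T.l u) (T.r v)) = flip M) :
    LApp F g = M ∘r g ∘r flip M := by
  rw [lApp_eq_sup, hrr, hll, hrl, hlr, bot_comp, reflTransGen_bot, eq_comp, bot_sup_eq]

def leftConj (N g : T → T → Prop) : T → T → Prop :=
  flip (fun w s => N (T.l w) s) ∘r g ∘r fun w s => N (T.l w) s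

theorem lApp_conj (N A g : T → T → Prop) :
    LApp (N ∘r A ∘r flip N) g =
      (fun u s => N (T.r u) s) ∘r (A ∘r ReflTransGen (leftConj N g ∘r A)) ∘r
        flip (fun u s => N (T.r u) s) := by
  set R : T → T → Prop := fun u s => N (T.r u) s
  set C : T → T → Prop := fun w s => N (T.l w) s
  have hLApp : LApp (N ∘r A ∘r flip N) g = (R ∘r A ∘r flip R) ⊔
      (R ∘r A ∘r flip C) ∘r g ∘r ReflTransGen ((C ∘r A ∘r flip C) ∘r g) ∘r (C ∘r A ∘r flip R) :=
    rfl
  rw [hLApp, reflTransGen_eq_sup_reflTransGen_comp (r := leftConj N g ∘r A), comp_sup, comp_eq,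
    sup_comp, comp_sup]
  congr 1
  calc _ = R ∘r A ∘r ((flip C ∘r g) ∘r ReflTransGen ((C ∘r A) ∘r (flip C ∘r g))) ∘r
          C ∘r A ∘r flip R := by simp only [comp_assoc]
    _ = R ∘r A ∘r (ReflTransGen ((flip C ∘r g) ∘r (C ∘r A)) ∘r (flip C ∘r g)) ∘r
          C ∘r A ∘r flip R := by rw [comp_reflTransGen_comp_comm]
    _ = _ := by simp only [leftConj, comp_assoc]; rfl

theorem lApp_eq_comp_reflTransGen (A g : T → T → Prop) :
    LApp A g = (fun u s => T.r u = s) ∘r (A ∘r ReflTransGen (leftConj (· = ·) g ∘r A)) ∘r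
      flip (fun u s => T.r u = s) := by
  simpa only [eq_comp, Std.Symm.flip_eq, comp_eq] using lApp_conj (· = ·) A g

/-- `fW` is the symmetric closure of `{(r u, l v) | fWrl u v}`. -/
def fWrl : T → T → Prop := fun u s =>
  (∃ t, u = T.r t ∧ s = T.r (T.r t)) ∨
  (∃ t c, u = T.l (T.p (T.l t) c) ∧ s = T.l (T.p t c)) ∨
  (∃ t c, u = T.l (T.p (T.r t) c) ∧ s = T.r (T.l (T.p t c)))

theorem lApp_fW (a : T → T → Prop) : LApp fW a = fWrl ∘r a ∘r flip fWrl := by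
  apply lApp_of_bipartite <;> ext u v
  · simp [fW]
  · simp [fW]
  · simp [fW, fWrl]
  · simp [fW, fWrl, flip, and_comm]

theorem fWrl_r : (fun u s => fWrl (T.r u) s) = fun u s => T.r (T.r u) = s := by
  ext u s
  simp [fWrl, eq_comm]

theorem leftConj_fWrl_repl (b : T → T → Prop) :
    leftConj fWrl (Repl b) = leftConj (· = ·) (Repl b) ⊔ leftConj (T.r · = ·) (Repl b) := by
  ext s s'
  constructor
  · rintro ⟨_, hs, _, ⟨t0, c, c', hb, rfl, rfl⟩, hs'⟩
    rcases hs with ⟨_, ⟨⟩, _⟩ | ⟨t, _, ⟨⟩, rfl⟩ | ⟨t, _, ⟨⟩, rfl⟩ <;>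
      rcases hs' with ⟨_, ⟨⟩, _⟩ | ⟨_, _, ⟨⟩, rfl⟩ | ⟨_, _, ⟨⟩, rfl⟩
    · exact Or.inl ⟨_, rfl, _, ⟨t, c, c', hb, rfl, rfl⟩, rfl⟩
    · exact Or.inr ⟨_, rfl, _, ⟨t, c, c', hb, rfl, rfl⟩, rfl⟩
  · rintro (⟨_, rfl, _, ⟨t, c, c', hb, rfl, rfl⟩, rfl⟩ |
      ⟨_, rfl, _, ⟨t, c, c', hb, rfl, rfl⟩, rfl⟩)
    · exact ⟨_, Or.inr (Or.inl ⟨t, c, rfl, rfl⟩), _, ⟨T.l t, c, c', hb, rfl, rfl⟩,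
        Or.inr (Or.inl ⟨t, c', rfl, rfl⟩)⟩
    · exact ⟨_, Or.inr (Or.inr ⟨t, c, rfl, rfl⟩), _, ⟨T.r t, c, c', hb, rfl, rfl⟩,
        Or.inr (Or.inr ⟨t, c', rfl, rfl⟩)⟩

theorem fW_realizes_W_general (a b : T → T → Prop) :
    LApp (LApp fW a) (Repl b) = LApp (LApp a (Repl b)) (Repl b) := by
  rw [lApp_fW, lApp_conj, fWrl_r, leftConj_fWrl_repl, comp_reflTransGen_sup_comp,
    lApp_eq_comp_reflTransGen a, lApp_conj]

/-- `f_W` realizes the contraction combinator: `(f_W • a) • (!b) = (a • (!b)) • (!b)`. -/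
theorem fW_realizes_W (a b : T → T → Prop)
    (ha : PartialInjection a) (hb : PartialInjection b) :
    LApp (LApp fW a) (Repl b) = LApp (LApp a (Repl b)) (Repl b) :=
  fW_realizes_W_general a b
end

section
/- Every linear combinatory algebra gives rise to a standard combinatory algebra: let (A, ·, !) be a linear combinatory algebra, define x ·s y = x · (!y), D' = C·(B·B·I)·(B·D·I), Bs = C·(B·(B·B·B)·(D'·I))·(C·((B·B)·F)·δ), Cs = D'·C, Is = D'·I, Ks = D'·K, and Ws = D'·W. Then for all x, y, z in A: Bs ·s x ·s y ·s z = x ·s (y ·s z); Cs ·s x ·s y ·s z = (x ·s z) ·s y; Is ·s x = x; Ks ·s x ·s y = x; and Ws ·s x ·s y = x ·s y ·s y. -/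
/-! The combinator `D' = C·(B·B·I)·(B·D·I)` satisfies `D'·a·b = a·(D·b)`, so `D'·a·(!y) = a·y`:
prefixing a linear combinator with `D'` makes it consume its first argument through a `!`.
This gives `Cs`, `Is`, `Ks`, `Ws` at once. For `Bs`, after absorbing `!x` one is left with
`B·x·(B·(F·!y)·δ)`, and `F·!y·(δ·!z) = F·!y·!!z = !(y·!z)` produces the standard composite. -/

section LinearCombinatoryAlgebra

variable {A : Type*} (app : A → A → A) {bang : A → A} (B C I D F δ : A)

local infixl:100 " ⬝ " => app

def dereliction : A := C ⬝ (B ⬝ B ⬝ I) ⬝ (B ⬝ D ⬝ I)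

def standardB : A :=
  C ⬝ (B ⬝ (B ⬝ B ⬝ B) ⬝ (dereliction app B C I D ⬝ I)) ⬝ (C ⬝ (B ⬝ B ⬝ F) ⬝ δ)

variable {B C I D F δ}

theorem dereliction_app_app (hB : ∀ x y z, B ⬝ x ⬝ y ⬝ z = x ⬝ (y ⬝ z))
    (hC : ∀ x y z, C ⬝ x ⬝ y ⬝ z = x ⬝ z ⬝ y) (hI : ∀ x, I ⬝ x = x) (a b : A) :
    dereliction app B C I D ⬝ a ⬝ b = a ⬝ (D ⬝ b) := by
  rw [dereliction, hC, hB, hI, hB, hB, hI]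

theorem dereliction_app_bang (hB : ∀ x y z, B ⬝ x ⬝ y ⬝ z = x ⬝ (y ⬝ z))
    (hC : ∀ x y z, C ⬝ x ⬝ y ⬝ z = x ⬝ z ⬝ y) (hI : ∀ x, I ⬝ x = x)
    (hD : ∀ x, D ⬝ bang x = x) (a y : A) :
    dereliction app B C I D ⬝ a ⬝ bang y = a ⬝ y := by
  rw [dereliction_app_app app hB hC hI, hD]

theorem standardB_app_bang_app_bang (hB : ∀ x y z, B ⬝ x ⬝ y ⬝ z = x ⬝ (y ⬝ z))
    (hC : ∀ x y z, C ⬝ x ⬝ y ⬝ z = x ⬝ z ⬝ y) (hI : ∀ x, I ⬝ x = x)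
    (hD : ∀ x, D ⬝ bang x = x) (x y : A) :
    standardB app B C I D F δ ⬝ bang x ⬝ bang y = B ⬝ x ⬝ (B ⬝ (F ⬝ bang y) ⬝ δ) := by
  rw [standardB, hC, hB, dereliction_app_bang app hB hC hI hD, hI, hB, hB, hC, hB]

theorem B_app_B_F_δ_app_bang (hB : ∀ x y z, B ⬝ x ⬝ y ⬝ z = x ⬝ (y ⬝ z))
    (hδ : ∀ x, δ ⬝ bang x = bang (bang x))
    (hF : ∀ x y, F ⬝ bang x ⬝ bang y = bang (x ⬝ y)) (x y z : A) :
    B ⬝ x ⬝ (B ⬝ (F ⬝ bang y) ⬝ δ) ⬝ bang z = x ⬝ bang (y ⬝ bang z) := by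
  rw [hB, hB, hδ, hF]

end LinearCombinatoryAlgebra

/-- Every linear combinatory algebra gives rise to a standard combinatory algebra, with
standard application `x ·s y = x·(!y)` and the elements
`D' = C·(B·B·I)·(B·D·I)`, `Bs = C·(B·(B·B·B)·(D'·I))·(C·((B·B)·F)·δ)`, `Cs = D'·C`,
`Is = D'·I`, `Ks = D'·K`, `Ws = D'·W`. -/
theorem lca_gives_sca {A : Type*} (app : A → A → A) (bang : A → A)
    (B C I K D δ F W : A)
    (hB : ∀ x y z, app (app (app B x) y) z = app x (app y z))
    (hC : ∀ x y z, app (app (app C x) y) z = app (app x z) y)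
    (hI : ∀ x, app I x = x)
    (hK : ∀ x y, app (app K x) (bang y) = x)
    (hD : ∀ x, app D (bang x) = x)
    (hδ : ∀ x, app δ (bang x) = bang (bang x))
    (hF : ∀ x y, app (app F (bang x)) (bang y) = bang (app x y))
    (hW : ∀ x y, app (app W x) (bang y) = app (app x (bang y)) (bang y)) :
    let s : A → A → A := fun u v => app u (bang v)
    let D' : A := app (app C (app (app B B) I)) (app (app B D) I)
    let Bs : A := app (app C (app (app B (app (app B B) B)) (app D' I)))
                      (app (app C (app (app B B) F)) δ)
    let Cs : A := app D' C
    let Is : A := app D' I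
    let Ks : A := app D' K
    let Ws : A := app D' W
    ∀ x y z : A,
      s (s (s Bs x) y) z = s x (s y z) ∧
      s (s (s Cs x) y) z = s (s x z) y ∧
      s Is x = x ∧
      s (s Ks x) y = x ∧
      s (s Ws x) y = s (s x y) y := by
  intro s D' Bs Cs Is Ks Ws x y z
  have hD' : ∀ a y, app (app D' a) (bang y) = app a y :=
    dereliction_app_bang app hB hC hI hD
  have hBs : app (app Bs (bang x)) (bang y) = app (app B x) (app (app B (app F (bang y))) δ) :=
    standardB_app_bang_app_bang app hB hC hI hD x y
  refine ⟨?_, ?_, ?_, ?_, ?_⟩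
  · simp only [s, hBs, B_app_B_F_δ_app_bang app hB hδ hF]
  · simp only [s, Cs, hD', hC]
  · simp only [s, Is, hD', hI]
  · simp only [s, Ks, hD', hK]
  · simp only [s, Ws, hD', hW]
end

section
/- Finitely describable partial involutions are not closed under linear application: there exist finitely describable partial involutions f and g on T such that f • g is not finitely describable. -/
/-- Terms over Σ with variables drawn from a countably infinite set (here `ℕ`). -/
inductive TV : Type
  | var : ℕ → TV
  | eps : TV
  | l : TV → TV
  | r : TV → TV
  | p : TV → TV → TV
  deriving DecidableEq

/-- Homomorphic extension of a ground substitution `σ : X → T` to terms with variables. -/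
def substG (σ : ℕ → T) : TV → T
  | TV.var n => σ n
  | TV.eps => T.eps
  | TV.l t => T.l (substG σ t)
  | TV.r t => T.r (substG σ t)
  | TV.p t u => T.p (substG σ t) (substG σ u)

/-- A relation on `T` is finitely describable if it is the symmetric closure of the set of
ground instances of a finite family of pairs of terms with variables. -/
def FinDescribable (f : T → T → Prop) : Prop :=
  ∃ S : Finset (TV × TV), ∀ a b, f a b ↔
    ∃ q ∈ S, ∃ σ : ℕ → T,
      (a = substG σ q.1 ∧ b = substG σ q.2) ∨ (a = substG σ q.2 ∧ b = substG σ q.1)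

/-
Take `F = Transfer` and `G = Swap` below. Each round of the loop `(F_ll ; G)*` in `F • G` moves
one `r` between the two arguments of a term `p(x, y)`. Entering through `F_rl` turns `l(x)` into
`p(x, ε)` and leaving through `F_lr` requires `p(ε, y)`, so `F • G` relates `l(rᵏ ε)` with
`r(rᵏ ε)` for every `k`, and nothing else: infinitely many pairs, none containing `p`.
A finite description has only finitely many instances free of `p`: instantiating all variables
by `p(ε, ε)` shows that only ground patterns can contribute such instances.
-/

open Relation

namespace T

def IsUnary : T → Prop
  | eps => True
  | l t => t.IsUnary
  | r t => t.IsUnary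
  | p _ _ => False

def numeral (k : ℕ) : T := T.r^[k] T.eps

theorem numeral_succ (k : ℕ) : numeral (k + 1) = r (numeral k) :=
  Function.iterate_succ_apply' _ _ _

theorem isUnary_numeral (k : ℕ) : (numeral k).IsUnary := by
  induction k with
  | zero => trivial
  | succ k ih => rwa [numeral_succ]

theorem numeral_injective : Function.Injective numeral := by
  intro m n h
  induction m generalizing n with
  | zero =>
    cases n with
    | zero => rfl
    | succ n => cases h.trans (numeral_succ n)
  | succ m ih =>
    cases n with
    | zero => cases (numeral_succ m).symm.trans h
    | succ n =>
      rw [numeral_succ, numeral_succ] at h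
      exact congrArg _ (ih (r.inj h))

end T

theorem substG_eq_of_isUnary {σ₀ : ℕ → T} (hσ₀ : ∀ n, ¬ (σ₀ n).IsUnary) {t : TV}
    (ht : (substG σ₀ t).IsUnary) (σ : ℕ → T) : substG σ t = substG σ₀ t := by
  induction t with
  | var n => exact absurd ht (hσ₀ n)
  | eps => rfl
  | l t ih => exact congrArg T.l (ih ht)
  | r t ih => exact congrArg T.r (ih ht)
  | p t u _ _ => exact ht.elim

theorem FinDescribable.finite_dom_of_isUnary {f : T → T → Prop} (hf : FinDescribable f)
    (hu : ∀ a b, f a b → a.IsUnary) : {a | ∃ b, f a b}.Finite := by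
  obtain ⟨S, hS⟩ := hf
  set σ₀ : ℕ → T := fun _ => .p .eps .eps
  have hσ₀ : ∀ n, ¬ (σ₀ n).IsUnary := fun _ => id
  have hground : ∀ q ∈ S, ∀ σ, substG σ q.1 = substG σ₀ q.1 ∧ substG σ q.2 = substG σ₀ q.2 :=
    fun q hq σ =>
      ⟨substG_eq_of_isUnary hσ₀ (hu _ _ ((hS _ _).2 ⟨q, hq, σ₀, .inl ⟨rfl, rfl⟩⟩)) σ,
        substG_eq_of_isUnary hσ₀ (hu _ _ ((hS _ _).2 ⟨q, hq, σ₀, .inr ⟨rfl, rfl⟩⟩)) σ⟩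
  refine (S.finite_toSet.biUnion fun q _ =>
    ({substG σ₀ q.1, substG σ₀ q.2} : Set T).toFinite).subset ?_
  rintro a ⟨b, hab⟩
  obtain ⟨q, hq, σ, ⟨rfl, -⟩ | ⟨rfl, -⟩⟩ := (hS a b).1 hab <;>
    exact Set.mem_biUnion hq (by simp [hground q hq σ])

def Instances (S : Finset (TV × TV)) (a b : T) : Prop :=
  ∃ q ∈ S, ∃ σ : ℕ → T, a = substG σ q.1 ∧ b = substG σ q.2

theorem finDescribable_symmGen_instances (S : Finset (TV × TV)) :
    FinDescribable (SymmGen (Instances S)) :=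
  ⟨S, fun a b => by simp only [SymmGen, Instances, exists_or, and_or_left, @and_comm (b = _)]⟩

theorem partialInvolution_of_symm {f : T → T → Prop} (hf : Fnal f)
    (hsymm : ∀ x y, f x y → f y x) : PartialInvolution f :=
  ⟨⟨hf, fun x y z hxz hyz => hf z x y (hsymm x z hxz) (hsymm y z hyz)⟩, hsymm⟩

inductive TransferGen : T → T → Prop
  | start (x : T) : TransferGen (.r (.l x)) (.l (.l (.p x .eps)))
  | move (x y : T) : TransferGen (.l (.r (.p (.r x) y))) (.l (.l (.p x (.r y))))
  | finish (y : T) : TransferGen (.l (.r (.p .eps y))) (.r (.r y))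

inductive SwapGen : T → T → Prop
  | mk (x : T) : SwapGen (.l x) (.r x)

def Transfer : T → T → Prop := SymmGen TransferGen

def Swap : T → T → Prop := SymmGen SwapGen

theorem partialInvolution_transfer : PartialInvolution Transfer :=
  partialInvolution_of_symm
    (by rintro _ _ _ (h | h) (h' | h') <;> cases h <;> cases h' <;> rfl)
    fun _ _ => SymmGen.symm

theorem partialInvolution_swap : PartialInvolution Swap :=
  partialInvolution_of_symm
    (by rintro _ _ _ (h | h) (h' | h') <;> cases h <;> cases h' <;> rfl)
    fun _ _ => SymmGen.symm

theorem transferGen_eq_instances :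
    TransferGen = Instances
      {(.r (.l (.var 0)), .l (.l (.p (.var 0) .eps))),
        (.l (.r (.p (.r (.var 0)) (.var 1))), .l (.l (.p (.var 0) (.r (.var 1))))),
        (.l (.r (.p .eps (.var 1))), .r (.r (.var 1)))} := by
  ext a b
  simp only [Instances, Finset.mem_insert, Finset.mem_singleton, exists_eq_or_imp, exists_eq_left]
  constructor
  · rintro (x | ⟨x, y⟩ | y)
    · exact .inl ⟨fun _ => x, rfl, rfl⟩
    · exact .inr (.inl ⟨fun n => if n = 0 then x else y, rfl, rfl⟩)
    · exact .inr (.inr ⟨fun _ => y, rfl, rfl⟩)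
  · rintro (⟨σ, rfl, rfl⟩ | ⟨σ, rfl, rfl⟩ | ⟨σ, rfl, rfl⟩)
    exacts [.start _, .move _ _, .finish _]

theorem swapGen_eq_instances : SwapGen = Instances {(.l (.var 0), .r (.var 0))} := by
  ext a b
  constructor
  · rintro ⟨x⟩
    exact ⟨_, Finset.mem_singleton_self _, fun _ => x, rfl, rfl⟩
  · rintro ⟨q, hq, σ, rfl, rfl⟩
    rw [Finset.mem_singleton.1 hq]
    exact .mk _

theorem finDescribable_transfer : FinDescribable Transfer :=
  (transferGen_eq_instances ▸ finDescribable_symmGen_instances _ :)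

theorem finDescribable_swap : FinDescribable Swap :=
  (swapGen_eq_instances ▸ finDescribable_symmGen_instances _ :)

local notation "Loop" => ReflTransGen (RComp (fun a b => Transfer (T.l a) (T.l b)) Swap)

theorem exists_iterate_of_loop_r {x y d : T} (h : Loop (.r (.p x y)) d) :
    ∃ k x', x = T.r^[k] x' ∧ d = .r (.p x' (T.r^[k] y)) := by
  induction h with
  | refl => exact ⟨0, x, rfl, rfl⟩
  | tail _ hstep ih =>
    obtain ⟨k, x', rfl, rfl⟩ := ih
    obtain ⟨_, hf | hf, hg | hg⟩ := hstep <;> cases hf <;> cases hg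
    exact ⟨k + 1, _, (Function.iterate_succ_apply _ _ _).symm,
      congrArg (fun y => T.r (.p _ y)) (Function.iterate_succ_apply' _ _ _).symm⟩

theorem exists_iterate_of_loop_l {x y d : T} (h : Loop (.l (.p x y)) d) :
    ∃ k y', y = T.r^[k] y' ∧ d = .l (.p (T.r^[k] x) y') := by
  induction h with
  | refl => exact ⟨0, y, rfl, rfl⟩
  | tail _ hstep ih =>
    obtain ⟨k, y', rfl, rfl⟩ := ih
    obtain ⟨_, hf | hf, hg | hg⟩ := hstep <;> cases hf <;> cases hg
    exact ⟨k + 1, _, (Function.iterate_succ_apply _ _ _).symm,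
      congrArg (fun x => T.l (.p x _)) (Function.iterate_succ_apply' _ _ _).symm⟩

theorem loop_r_iterate (k : ℕ) (x y : T) :
    Loop (.r (.p (T.r^[k] x) y)) (.r (.p x (T.r^[k] y))) := by
  induction k generalizing y with
  | zero => exact .refl
  | succ k ih =>
    rw [Function.iterate_succ_apply', Function.iterate_succ_apply]
    exact .head ⟨_, .of_rel (.move _ _), .of_rel (.mk _)⟩ (ih (.r y))

theorem lApp_transfer_swap_cases {u v : T} (h : LApp Transfer Swap u v) :
    ∃ k, (u = .l (T.numeral k) ∧ v = .r (T.numeral k)) ∨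
      (u = .r (T.numeral k) ∧ v = .l (T.numeral k)) := by
  rcases h with h | ⟨_, hin | hin, _, hswap | hswap, _, hloop, hout⟩
  · rcases h with h | h <;> cases h
  · cases hin; cases hswap
    obtain ⟨k, x, rfl, rfl⟩ := exists_iterate_of_loop_r hloop
    rcases hout with hout | hout <;> cases hout
    exact ⟨k, .inl ⟨rfl, rfl⟩⟩
  · cases hin; cases hswap
  · cases hin; cases hswap
  · cases hin; cases hswap
    obtain ⟨k, y, rfl, rfl⟩ := exists_iterate_of_loop_l hloop
    rcases hout with hout | hout <;> cases hout
    exact ⟨k, .inr ⟨rfl, rfl⟩⟩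

theorem lApp_transfer_swap_numeral (k : ℕ) :
    LApp Transfer Swap (.l (T.numeral k)) (.r (T.numeral k)) :=
  .inr ⟨_, .of_rel (.start _), _, .of_rel (.mk _), _, loop_r_iterate k .eps .eps,
    .of_rel (.finish _)⟩

theorem not_finDescribable_lApp_transfer_swap : ¬ FinDescribable (LApp Transfer Swap) := by
  intro h
  have hrange : Set.range (fun k => T.l (T.numeral k)) ⊆ {a | ∃ b, LApp Transfer Swap a b} :=
    Set.range_subset_iff.2 fun k => ⟨_, lApp_transfer_swap_numeral k⟩
  refine (Set.infinite_range_of_injective ?_).mono hrange (h.finite_dom_of_isUnary ?_)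
  · exact fun m n hmn => T.numeral_injective (T.l.inj hmn)
  · intro u v huv
    obtain ⟨k, ⟨rfl, -⟩ | ⟨rfl, -⟩⟩ := lApp_transfer_swap_cases huv <;> exact T.isUnary_numeral k

/-- Finitely describable partial involutions are not closed under linear application. -/
theorem finDescribable_not_closed_under_LApp :
    ∃ f g : T → T → Prop,
      PartialInvolution f ∧ PartialInvolution g ∧
      FinDescribable f ∧ FinDescribable g ∧
      ¬ FinDescribable (LApp f g) :=
  ⟨Transfer, Swap, partialInvolution_transfer, partialInvolution_swap, finDescribable_transfer,
    finDescribable_swap, not_finDescribable_lApp_transfer_swap⟩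
end

section
/- Replication of automata computes replication of relations: let A = (Q, q_ι, q_f, R) be a biorthogonal pattern-matching automaton and let !A = (Q, q_ι, q_f, !R), where !R is obtained by replacing each rule (q, r) → (s, q') of R by (q, p(x, r)) → (p(x, s), q') for a fresh variable x not occurring in any rule of R (with distinct fresh variables chosen for distinct rules). Then !A is a biorthogonal pattern-matching automaton and R_{!A} = !(R_A). -/
/-- Homomorphic extension of a substitution `σ : X → TV` to terms with variables. -/
def substV (σ : ℕ → TV) : TV → TV
  | TV.var n => σ n
  | TV.eps => TV.eps
  | TV.l t => TV.l (substV σ t)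
  | TV.r t => TV.r (substV σ t)
  | TV.p t u => TV.p (substV σ t) (substV σ u)

/-- The set of variables occurring in a term. -/
def varsOf : TV → Finset ℕ
  | TV.var n => {n}
  | TV.eps => ∅
  | TV.l t => varsOf t
  | TV.r t => varsOf t
  | TV.p t u => varsOf t ∪ varsOf u

/-- The number of occurrences of the variable `v` in a term. -/
def occCount (v : ℕ) : TV → ℕ
  | TV.var n => if n = v then 1 else 0
  | TV.eps => 0
  | TV.l t => occCount v t
  | TV.r t => occCount v t
  | TV.p t u => occCount v t + occCount v u

/-- A transition rule `(q, r) → (s, q')`, encoded as the tuple `(q, r, s, q')`. -/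
abbrev Rule := ℕ × TV × TV × ℕ

def ruleSrc (ρ : Rule) : ℕ := ρ.1
def ruleLhs (ρ : Rule) : TV := ρ.2.1
def ruleRhs (ρ : Rule) : TV := ρ.2.2.1
def ruleTgt (ρ : Rule) : ℕ := ρ.2.2.2
def ruleVars (ρ : Rule) : Finset ℕ := varsOf (ruleLhs ρ) ∪ varsOf (ruleRhs ρ)

/-- A pattern-matching automaton: a finite set of states (drawn from `ℕ`), distinguished
initial and final states, and a finite set of transition rules. -/
structure PMA where
  Q : Finset ℕ
  qi : ℕ
  qf : ℕ
  R : Finset Rule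

/-- Well-formedness of a pattern-matching automaton: the initial and final states are distinct
states of the automaton; each rule connects states of the automaton, its right-hand side only
uses variables of its left-hand side, no rule targets the initial state nor leaves the final
state; and distinct rules use disjoint sets of variables. -/
def PMA.WellFormed (A : PMA) : Prop :=
  A.qi ∈ A.Q ∧ A.qf ∈ A.Q ∧ A.qi ≠ A.qf ∧
  (∀ ρ ∈ A.R, ruleSrc ρ ∈ A.Q ∧ ruleTgt ρ ∈ A.Q ∧
    varsOf (ruleRhs ρ) ⊆ varsOf (ruleLhs ρ) ∧ ruleTgt ρ ≠ A.qi ∧ ruleSrc ρ ≠ A.qf) ∧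
  (∀ ρ₁ ∈ A.R, ∀ ρ₂ ∈ A.R, ρ₁ ≠ ρ₂ → Disjoint (ruleVars ρ₁) (ruleVars ρ₂))

/-- Orthogonality: non-ambiguity (left-hand sides of distinct rules with the same source state
are not unifiable) and left-linearity (no variable occurs more than once in a left-hand side). -/
def PMA.Orthogonal (A : PMA) : Prop :=
  (∀ ρ₁ ∈ A.R, ∀ ρ₂ ∈ A.R, ρ₁ ≠ ρ₂ → ruleSrc ρ₁ = ruleSrc ρ₂ →
    ¬ ∃ σ : ℕ → TV, substV σ (ruleLhs ρ₁) = substV σ (ruleLhs ρ₂)) ∧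
  (∀ ρ ∈ A.R, ∀ v, occCount v (ruleLhs ρ) ≤ 1)

/-- The dual of a rule. -/
def ruleOp (ρ : Rule) : Rule := (ruleTgt ρ, ruleRhs ρ, ruleLhs ρ, ruleSrc ρ)

/-- The dual automaton `A^op`. -/
def PMA.op (A : PMA) : PMA := ⟨A.Q, A.qf, A.qi, A.R.image ruleOp⟩

/-- Biorthogonality: both `A` and `A^op` are orthogonal. -/
def PMA.Biorthogonal (A : PMA) : Prop := A.Orthogonal ∧ A.op.Orthogonal

/-- The step relation on configurations induced by a set of rules: `(q,t) → (q',t')` iff some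
rule `(q, r) → (s, q')` and ground substitution `σ` satisfy `σ̂(r) = t` and `σ̂(s) = t'`. -/
def StepOf (Rs : Set Rule) : ℕ × T → ℕ × T → Prop :=
  fun c c' => ∃ ρ ∈ Rs, ruleSrc ρ = c.1 ∧ ruleTgt ρ = c'.1 ∧
    ∃ σ : ℕ → T, substG σ (ruleLhs ρ) = c.2 ∧ substG σ (ruleRhs ρ) = c'.2

/-- The step relation of an automaton. -/
def PMA.Step (A : PMA) : ℕ × T → ℕ × T → Prop := StepOf ↑A.R

/-- The input–output relation induced by a set of rules and initial/final states. -/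
def RelOf (Rs : Set Rule) (qi qf : ℕ) : T → T → Prop :=
  fun t t' => Relation.ReflTransGen (StepOf Rs) (qi, t) (qf, t')

/-- The input–output relation `R_A` of an automaton. -/
def PMA.Rel (A : PMA) : T → T → Prop := RelOf ↑A.R A.qi A.qf

/-! ### Auxiliary lemmas for `replication_of_automata` -/

/-- The replicated rule. -/
def bangR (fresh : Rule → ℕ) (ρ : Rule) : Rule :=
  (ruleSrc ρ, TV.p (TV.var (fresh ρ)) (ruleLhs ρ),
    TV.p (TV.var (fresh ρ)) (ruleRhs ρ), ruleTgt ρ)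

lemma bangR_inj {fresh : Rule → ℕ} {ρ₁ ρ₂ : Rule} (h : bangR fresh ρ₁ = bangR fresh ρ₂) :
    ρ₁ = ρ₂ := by
  obtain ⟨a₁, b₁, c₁, d₁⟩ := ρ₁
  obtain ⟨a₂, b₂, c₂, d₂⟩ := ρ₂
  simp only [bangR, ruleSrc, ruleLhs, ruleRhs, ruleTgt, Prod.mk.injEq, TV.p.injEq,
    TV.var.injEq] at h ⊢
  tauto

lemma ruleOp_inj {ρ₁ ρ₂ : Rule} (h : ruleOp ρ₁ = ruleOp ρ₂) : ρ₁ = ρ₂ := by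
  obtain ⟨a₁, b₁, c₁, d₁⟩ := ρ₁
  obtain ⟨a₂, b₂, c₂, d₂⟩ := ρ₂
  simp only [ruleOp, ruleSrc, ruleLhs, ruleRhs, ruleTgt, Prod.mk.injEq] at h ⊢
  tauto

lemma substG_congr {σ σ' : ℕ → T} : ∀ {t : TV}, (∀ v ∈ varsOf t, σ v = σ' v) →
    substG σ t = substG σ' t
  | TV.var n, h => h n (by simp [varsOf])
  | TV.eps, _ => rfl
  | TV.l t, h => by
      simp only [substG]; rw [substG_congr (fun v hv => h v (by simpa [varsOf] using hv))]
  | TV.r t, h => by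
      simp only [substG]; rw [substG_congr (fun v hv => h v (by simpa [varsOf] using hv))]
  | TV.p t u, h => by
      simp only [substG]
      rw [substG_congr (fun v hv => h v (by simp [varsOf, hv])),
        substG_congr (fun v hv => h v (by simp [varsOf, hv]))]

lemma occCount_eq_zero {v : ℕ} {t : TV} (h : v ∉ varsOf t) : occCount v t = 0 := by
  induction t with
  | var n => simp [varsOf] at h; simp [occCount, Ne.symm h]
  | eps => rfl
  | l t ih => exact ih (by simpa [varsOf] using h)
  | r t ih => exact ih (by simpa [varsOf] using h)
  | p t u iht ihu =>
      simp only [varsOf, Finset.mem_union, not_or] at h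
      simp [occCount, iht h.1, ihu h.2]

lemma occ_p_var_le_one {x v : ℕ} {t : TV} (hx : x ∉ varsOf t) (ht : occCount v t ≤ 1) :
    occCount v (TV.p (TV.var x) t) ≤ 1 := by
  by_cases h : x = v
  · subst h
    simp [occCount, occCount_eq_zero hx]
  · simpa [occCount, h] using ht

/-- Characterization of steps of the replicated automaton. -/
lemma bang_step {A : PMA} {fresh : Rule → ℕ}
    (hf : ∀ ρ ∈ A.R, fresh ρ ∉ ruleVars ρ) {c c' : ℕ × T} :
    StepOf ↑(A.R.image (bangR fresh)) c c' ↔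
      ∃ s u u', c.2 = T.p s u ∧ c'.2 = T.p s u' ∧ StepOf ↑A.R (c.1, u) (c'.1, u') := by
  constructor
  · rintro ⟨τ, hτ, hsrc, htgt, σ, hl, hr⟩
    rw [Finset.mem_coe, Finset.mem_image] at hτ
    obtain ⟨ρ, hρ, rfl⟩ := hτ
    exact ⟨σ (fresh ρ), substG σ (ruleLhs ρ), substG σ (ruleRhs ρ), hl.symm, hr.symm,
      ρ, hρ, hsrc, htgt, σ, rfl, rfl⟩
  · rintro ⟨s, u, u', h2, h2', ρ, hρ, hsrc, htgt, σ, hl, hr⟩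
    have hx := hf ρ hρ
    simp only [ruleVars, Finset.mem_union, not_or] at hx
    refine ⟨bangR fresh ρ, Finset.mem_coe.2 (Finset.mem_image_of_mem _ hρ), hsrc, htgt,
      Function.update σ (fresh ρ) s, ?_, ?_⟩
    · show T.p (Function.update σ (fresh ρ) s (fresh ρ)) _ = _
      rw [Function.update_self, h2,
        substG_congr (σ' := σ) (fun v hv => Function.update_of_ne (by rintro rfl; exact hx.1 hv) _ _), hl]
    · show T.p (Function.update σ (fresh ρ) s (fresh ρ)) _ = _
      rw [Function.update_self, h2',
        substG_congr (σ' := σ) (fun v hv => Function.update_of_ne (by rintro rfl; exact hx.2 hv) _ _), hr]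

lemma bang_chain {A : PMA} {fresh : Rule → ℕ}
    (hf : ∀ ρ ∈ A.R, fresh ρ ∉ ruleVars ρ) {qf : ℕ} {c : ℕ × T} {b : T}
    (h : Relation.ReflTransGen (StepOf ↑(A.R.image (bangR fresh))) c (qf, b)) :
    ∀ s u, c.2 = T.p s u →
      ∃ v, b = T.p s v ∧ Relation.ReflTransGen (StepOf ↑A.R) (c.1, u) (qf, v) := by
  induction h using Relation.ReflTransGen.head_induction_on with
  | refl => exact fun s u h => ⟨u, h, .refl⟩
  | head hstep _ ih =>
    intro s u hc
    obtain ⟨s', u₀, u₀', h2, h2', hst⟩ := (bang_step hf).1 hstep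
    rw [hc] at h2
    injection h2.symm with hs hu
    rw [hs] at h2'
    rw [hu] at hst
    obtain ⟨v, hv, hchain⟩ := ih s u₀' h2'
    exact ⟨v, hv, .head hst hchain⟩

lemma chain_bang {A : PMA} {fresh : Rule → ℕ}
    (hf : ∀ ρ ∈ A.R, fresh ρ ∉ ruleVars ρ) {c c' : ℕ × T}
    (h : Relation.ReflTransGen (StepOf ↑A.R) c c') (s : T) :
    Relation.ReflTransGen (StepOf ↑(A.R.image (bangR fresh)))
      (c.1, T.p s c.2) (c'.1, T.p s c'.2) := by
  induction h with
  | refl => exact .refl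
  | tail _ hbc ih => exact ih.tail ((bang_step hf).2 ⟨s, _, _, rfl, rfl, hbc⟩)

lemma ruleVars_bangR (fresh : Rule → ℕ) (ρ : Rule) :
    ruleVars (bangR fresh ρ) = insert (fresh ρ) (ruleVars ρ) := by
  ext a
  simp only [ruleVars, bangR, ruleLhs, ruleRhs, varsOf, Finset.mem_union, Finset.mem_insert,
    Finset.mem_singleton]
  tauto

/-- Replication of automata computes replication of relations: replacing each rule
`(q, r) → (s, q')` by `(q, p(x,r)) → (p(x,s), q')` for fresh, pairwise distinct
variables `x` yields a biorthogonal pattern-matching automaton `!A` with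
`R_{!A} = !(R_A)`. -/
theorem replication_of_automata (A : PMA)
    (hwf : A.WellFormed) (hbi : A.Biorthogonal)
    (fresh : Rule → ℕ)
    (hfreshInj : ∀ ρ₁ ∈ A.R, ∀ ρ₂ ∈ A.R, ρ₁ ≠ ρ₂ → fresh ρ₁ ≠ fresh ρ₂)
    (hfresh : ∀ ρ ∈ A.R, ∀ ρ' ∈ A.R, fresh ρ ∉ ruleVars ρ') :
    let bangA : PMA := ⟨A.Q, A.qi, A.qf,
      A.R.image (fun ρ =>
        (ruleSrc ρ, TV.p (TV.var (fresh ρ)) (ruleLhs ρ),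
          TV.p (TV.var (fresh ρ)) (ruleRhs ρ), ruleTgt ρ))⟩
    bangA.WellFormed ∧ bangA.Biorthogonal ∧ bangA.Rel = Repl A.Rel := by
  intro bangA
  obtain ⟨hqi, hqf, hne, hrules, hdisj⟩ := hwf
  obtain ⟨⟨hamb, hlin⟩, hambop, hlinop⟩ := hbi
  have hff : ∀ ρ ∈ A.R, fresh ρ ∉ ruleVars ρ := fun ρ hρ => hfresh ρ hρ ρ hρ
  have hbR : bangA.R = A.R.image (bangR fresh) := rfl
  refine ⟨⟨hqi, hqf, hne, ?_, ?_⟩, ⟨⟨?_, ?_⟩, ?_, ?_⟩, ?_⟩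
  · -- rules well-formed
    intro τ hτ
    rw [hbR, Finset.mem_image] at hτ
    obtain ⟨ρ, hρ, rfl⟩ := hτ
    obtain ⟨h1, h2, h3, h4, h5⟩ := hrules ρ hρ
    refine ⟨h1, h2, ?_, h4, h5⟩
    show varsOf (TV.p (TV.var (fresh ρ)) (ruleRhs ρ)) ⊆
      varsOf (TV.p (TV.var (fresh ρ)) (ruleLhs ρ))
    exact Finset.union_subset_union_right h3
  · -- variable disjointness
    intro τ₁ hτ₁ τ₂ hτ₂ hne'
    rw [hbR, Finset.mem_image] at hτ₁ hτ₂
    obtain ⟨ρ₁, hρ₁, rfl⟩ := hτ₁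
    obtain ⟨ρ₂, hρ₂, rfl⟩ := hτ₂
    have hρne : ρ₁ ≠ ρ₂ := fun h => hne' (by rw [h])
    rw [Finset.disjoint_left]
    intro a ha hb
    rw [ruleVars_bangR, Finset.mem_insert] at ha hb
    rcases ha with rfl | ha
    · rcases hb with h | h
      · exact hfreshInj ρ₁ hρ₁ ρ₂ hρ₂ hρne h
      · exact hfresh ρ₁ hρ₁ ρ₂ hρ₂ h
    · rcases hb with rfl | hb
      · exact hfresh ρ₂ hρ₂ ρ₁ hρ₁ ha
      · exact Finset.disjoint_left.1 (hdisj ρ₁ hρ₁ ρ₂ hρ₂ hρne) ha hb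
  · -- non-ambiguity of bangA
    rintro τ₁ hτ₁ τ₂ hτ₂ hne' hsrc ⟨σ, hσ⟩
    rw [hbR, Finset.mem_image] at hτ₁ hτ₂
    obtain ⟨ρ₁, hρ₁, rfl⟩ := hτ₁
    obtain ⟨ρ₂, hρ₂, rfl⟩ := hτ₂
    have hρne : ρ₁ ≠ ρ₂ := fun h => hne' (by rw [h])
    refine hamb ρ₁ hρ₁ ρ₂ hρ₂ hρne hsrc ⟨σ, ?_⟩
    have h : TV.p (σ (fresh ρ₁)) (substV σ (ruleLhs ρ₁)) =
        TV.p (σ (fresh ρ₂)) (substV σ (ruleLhs ρ₂)) := hσ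
    exact (TV.p.injEq _ _ _ _ ▸ h).2
  · -- left-linearity of bangA
    intro τ hτ v
    rw [hbR, Finset.mem_image] at hτ
    obtain ⟨ρ, hρ, rfl⟩ := hτ
    show occCount v (TV.p (TV.var (fresh ρ)) (ruleLhs ρ)) ≤ 1
    have hx := hff ρ hρ
    simp only [ruleVars, Finset.mem_union, not_or] at hx
    exact occ_p_var_le_one hx.1 (hlin ρ hρ v)
  · -- non-ambiguity of bangA.op
    rintro τ₁ hτ₁ τ₂ hτ₂ hne' hsrc ⟨σ, hσ⟩
    simp only [PMA.op, hbR, Finset.image_image, Finset.mem_image, Function.comp] at hτ₁ hτ₂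
    obtain ⟨ρ₁, hρ₁, rfl⟩ := hτ₁
    obtain ⟨ρ₂, hρ₂, rfl⟩ := hτ₂
    have hρne : ρ₁ ≠ ρ₂ := fun h => hne' (by rw [h])
    have hopne : ruleOp ρ₁ ≠ ruleOp ρ₂ := fun h => hρne (ruleOp_inj h)
    refine hambop (ruleOp ρ₁) (Finset.mem_image_of_mem _ hρ₁)
      (ruleOp ρ₂) (Finset.mem_image_of_mem _ hρ₂) hopne hsrc ⟨σ, ?_⟩
    have h : TV.p (σ (fresh ρ₁)) (substV σ (ruleRhs ρ₁)) =
        TV.p (σ (fresh ρ₂)) (substV σ (ruleRhs ρ₂)) := hσ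
    exact (TV.p.injEq _ _ _ _ ▸ h).2
  · -- left-linearity of bangA.op
    intro τ hτ v
    simp only [PMA.op, hbR, Finset.image_image, Finset.mem_image, Function.comp] at hτ
    obtain ⟨ρ, hρ, rfl⟩ := hτ
    show occCount v (TV.p (TV.var (fresh ρ)) (ruleRhs ρ)) ≤ 1
    have hx := hff ρ hρ
    simp only [ruleVars, Finset.mem_union, not_or] at hx
    exact occ_p_var_le_one hx.2 (hlinop (ruleOp ρ) (Finset.mem_image_of_mem _ hρ) v)
  · -- the relation
    funext a b
    apply propext
    constructor
    · intro h
      have h' : Relation.ReflTransGen (StepOf ↑(A.R.image (bangR fresh)))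
          (A.qi, a) (A.qf, b) := h
      rcases Relation.ReflTransGen.cases_head h' with heq | ⟨c, hstep, hrest⟩
      · exact absurd (congrArg Prod.fst heq) hne
      · obtain ⟨s, u, u', h2, h2', hst⟩ := (bang_step hff).1 hstep
        obtain ⟨v, rfl, hchain⟩ := bang_chain hff hrest s u' h2'
        exact ⟨s, u, v, Relation.ReflTransGen.head hst hchain, h2, rfl⟩
    · rintro ⟨t, u, v, huv, rfl, rfl⟩
      show Relation.ReflTransGen (StepOf ↑(A.R.image (bangR fresh)))
        (A.qi, T.p t u) (A.qf, T.p t v)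
      exact chain_bang hff huv t
end
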